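/- arXiv:2402.08331 — 12 statements merged into one kernel-verified Lean document; each statement's English description precedes it below -/
import Mathlib

section
/- Let 0 < γ < 1 be an irrational number whose continued fraction expansion γ = [0; a_1, a_2, a_3, …] is purely periodic with period m ≥ 1, i.e., a_{i+m} = a_i for all i ≥ 1, and let p_i, q_i be the numerators and denominators of its convergents. Let n ≥ 1 be an integer and let e_0, e_1, …, e_t be natural numbers satisfying: n − 1 = Σ_{0≤i≤t} e_i q_i; 0 ≤ e_0 < a_1; 0 ≤ e_i ≤ a_{i+1} for all i ≥ 1; and whenever e_i = a_{i+1} for some i ≥ 1, then e_{i−1} = 0 (i.e., the e_i form the canonical Ostrowski γ-representation of n − 1). Then Σ_{0≤i≤t} e_i q_{i+m} = q_m (n − 1) + q_{m−1} ⌊n γ⌋. -/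
/-!
Write `θ i = q i * γ - p i`. The Gauss map gives `θ (i + 1) = -x (i + 1) * θ i`, so the errors
alternate in sign and `β i = (-1) ^ i * θ i` is positive with `β k = a (k + 2) * β (k + 1) + β (k + 2)`.
Summing an Ostrowski representation from the top, the tail sums stay in `(-β k, e k * β k + β (k + 1))`,
so `(n - 1) γ - ∑ e i * p i` lies in `(-γ, 1 - γ)`, i.e. `⌊n γ⌋ = ∑ e i * p i`. Periodicity of `a`
makes `i ↦ q (i + m)` a solution of the convergent recurrence, hence the combination
`q m * q i + q (m - 1) * p i` of the two basic solutions, and summing against `e` gives the identity.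
-/

open Finset

section ContinuedFraction

variable {a : ℕ → ℕ} {p q : ℕ → ℤ}

theorem recurrence_shift_of_periodic {m : ℕ} (hm : 1 ≤ m) (haper : ∀ i, 1 ≤ i → a (i + m) = a i)
    (hp0 : p 0 = 0) (hp1 : p 1 = 1) (hq0 : q 0 = 1) (hq1 : q 1 = a 1)
    (hp : ∀ i, p (i + 2) = a (i + 2) * p (i + 1) + p i)
    (hq : ∀ i, q (i + 2) = a (i + 2) * q (i + 1) + q i)
    {s : ℕ → ℤ} (hs : ∀ i, s (i + 2) = a (i + 2) * s (i + 1) + s i) (i : ℕ) :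
    s (i + m) = s m * q i + s (m - 1) * p i := by
  induction i using Nat.twoStepInduction with
  | zero => simp [hq0, hp0]
  | one =>
    obtain ⟨k, rfl⟩ : ∃ k, m = k + 1 := ⟨m - 1, by omega⟩
    have ha : a (k + 2) = a 1 := by
      rw [← haper 1 le_rfl, add_comm 1, add_assoc]
    rw [add_comm 1, hs k, ha, hq1, hp1, Nat.add_sub_cancel]
    ring
  | more i ih₀ ih₁ =>
    have ha : a (i + m + 2) = a (i + 2) := by
      simpa [add_right_comm i 2 m] using haper (i + 2) (by omega)
    rw [add_right_comm i 2 m, hs, ha, add_right_comm i m 1, ih₁, ih₀, hp, hq]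
    ring

def convergentError (γ : ℝ) (p q : ℕ → ℤ) (i : ℕ) : ℝ := q i * γ - p i

theorem convergentError_add_two (γ : ℝ) (hp : ∀ i, p (i + 2) = a (i + 2) * p (i + 1) + p i)
    (hq : ∀ i, q (i + 2) = a (i + 2) * q (i + 1) + q i) (i : ℕ) :
    convergentError γ p q (i + 2) =
      a (i + 2) * convergentError γ p q (i + 1) + convergentError γ p q i := by
  simp only [convergentError, hp, hq]
  push_cast
  ring

theorem gauss_iterate_pos_irrational {x : ℕ → ℝ} (h0 : 0 < x 0) (hirr : Irrational (x 0))
    (hx : ∀ i, x (i + 1) = Int.fract (1 / x i)) (i : ℕ) : 0 < x i ∧ Irrational (x i) := by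
  induction i with
  | zero => exact ⟨h0, hirr⟩
  | succ i ih =>
    have hirr' : Irrational (x (i + 1)) := by
      rw [hx, Int.fract]
      exact (one_div (x i) ▸ ih.2.inv).sub_intCast _
    exact ⟨(hx i ▸ Int.fract_nonneg _).lt_of_ne' hirr'.ne_zero, hirr'⟩

theorem convergentError_succ {γ : ℝ} {x : ℕ → ℝ} (hx0 : x 0 = γ)
    (hx : ∀ i, x (i + 1) = 1 / x i - a (i + 1)) (hxne : ∀ i, x i ≠ 0)
    (hp0 : p 0 = 0) (hp1 : p 1 = 1) (hq0 : q 0 = 1) (hq1 : q 1 = a 1)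
    (hp : ∀ i, p (i + 2) = a (i + 2) * p (i + 1) + p i)
    (hq : ∀ i, q (i + 2) = a (i + 2) * q (i + 1) + q i) (i : ℕ) :
    convergentError γ p q (i + 1) = -x (i + 1) * convergentError γ p q i := by
  induction i with
  | zero =>
    have hγ : γ ≠ 0 := hx0 ▸ hxne 0
    simp only [convergentError, hp0, hp1, hq0, hq1, hx, hx0, zero_add]
    push_cast
    field_simp
    ring
  | succ i ih =>
    have hprev : convergentError γ p q i = -convergentError γ p q (i + 1) / x (i + 1) := by
      rw [ih]
      field_simp [hxne (i + 1)]
    rw [convergentError_add_two γ hp hq, hx (i + 1), hprev]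
    field_simp [hxne (i + 1)]
    ring

theorem neg_one_pow_mul_convergentError_pos {γ : ℝ} {x : ℕ → ℝ} (hγ0 : 0 < γ)
    (hxpos : ∀ i, 0 < x i) (hp0 : p 0 = 0) (hq0 : q 0 = 1)
    (hsucc : ∀ i, convergentError γ p q (i + 1) = -x (i + 1) * convergentError γ p q i) (i : ℕ) :
    0 < (-1) ^ i * convergentError γ p q i := by
  induction i with
  | zero => simpa [convergentError, hp0, hq0] using hγ0
  | succ i ih =>
    rw [hsucc, pow_succ, show (-1) ^ i * -1 * (-x (i + 1) * convergentError γ p q i) =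
      x (i + 1) * ((-1) ^ i * convergentError γ p q i) by ring]
    exact mul_pos (hxpos (i + 1)) ih

end ContinuedFraction

theorem alternating_digit_sum_bounds {a e : ℕ → ℕ} {β : ℕ → ℝ} (hβ : ∀ k, 0 < β k)
    (hrec : ∀ k, β k = a (k + 2) * β (k + 1) + β (k + 2))
    (he : ∀ i, 1 ≤ i → e i ≤ a (i + 1)) (d k : ℕ) :
    -β k < ∑ i ∈ range d, (-1) ^ i * e (k + i) * β (k + i) ∧
      ∑ i ∈ range d, (-1) ^ i * e (k + i) * β (k + i) < e k * β k + β (k + 1) := by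
  induction d generalizing k with
  | zero =>
    have := hβ k
    have := hβ (k + 1)
    simp only [sum_range_zero]
    exact ⟨by linarith, by positivity⟩
  | succ d ih =>
    have hsplit : ∑ i ∈ range (d + 1), (-1) ^ i * e (k + i) * β (k + i) =
        e k * β k - ∑ i ∈ range d, (-1) ^ i * e (k + 1 + i) * β (k + 1 + i) := by
      rw [sum_range_succ', sub_eq_neg_add, ← sum_neg_distrib]
      congr 1
      · refine sum_congr rfl fun i _ => ?_
        rw [add_right_comm k 1 i, ← add_assoc, pow_succ]
        ring
      · simp
    obtain ⟨hlow, hup⟩ := ih (k + 1)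
    have hdigit : (e (k + 1) : ℝ) * β (k + 1) ≤ a (k + 2) * β (k + 1) :=
      mul_le_mul_of_nonneg_right (by exact_mod_cast he (k + 1) (by omega)) (hβ (k + 1)).le
    have hβk := hrec k
    have hek : (0 : ℝ) ≤ e k * β k := mul_nonneg (Nat.cast_nonneg _) (hβ k).le
    rw [hsplit]
    constructor <;> linarith

theorem floor_mul_eq_sum_digit_mul_num {γ : ℝ} (hγirr : Irrational γ) (hγ0 : 0 < γ)
    {a : ℕ → ℕ} {x : ℕ → ℝ} (hx0 : x 0 = γ)
    (hgauss : ∀ i, (a (i + 1) : ℤ) = ⌊1 / x i⌋ ∧ x (i + 1) = 1 / x i - a (i + 1))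
    {p q : ℕ → ℤ} (hp0 : p 0 = 0) (hp1 : p 1 = 1) (hq0 : q 0 = 1) (hq1 : q 1 = a 1)
    (hp : ∀ i, p (i + 2) = a (i + 2) * p (i + 1) + p i)
    (hq : ∀ i, q (i + 2) = a (i + 2) * q (i + 1) + q i)
    {n t : ℕ} {e : ℕ → ℕ} (hrep : (n : ℤ) - 1 = ∑ i ∈ range (t + 1), (e i : ℤ) * q i)
    (he0 : e 0 < a 1) (hei : ∀ i, 1 ≤ i → e i ≤ a (i + 1)) :
    ⌊(n : ℝ) * γ⌋ = ∑ i ∈ range (t + 1), (e i : ℤ) * p i := by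
  have hfract (i : ℕ) : x (i + 1) = Int.fract (1 / x i) := by
    rw [(hgauss i).2, Int.fract, ← (hgauss i).1, Int.cast_natCast]
  have hxpos (i : ℕ) : 0 < x i :=
    (gauss_iterate_pos_irrational (hx0 ▸ hγ0) (hx0 ▸ hγirr) hfract i).1
  have hθ := convergentError_succ hx0 (fun i => (hgauss i).2) (fun i => (hxpos i).ne')
    hp0 hp1 hq0 hq1 hp hq
  set β : ℕ → ℝ := fun i => (-1) ^ i * convergentError γ p q i with hβ
  have hβ0 : β 0 = γ := by simp [β, convergentError, hp0, hq0]
  have hβ1 : β 1 = 1 - a 1 * γ := by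
    simp [β, convergentError, hp1, hq1]
  have hβpos : ∀ i, 0 < β i := neg_one_pow_mul_convergentError_pos hγ0 hxpos hp0 hq0 hθ
  have hβrec (k : ℕ) : β k = a (k + 2) * β (k + 1) + β (k + 2) := by
    simp only [hβ, convergentError_add_two γ hp hq k, pow_succ]
    ring
  obtain ⟨hlow, hup⟩ := alternating_digit_sum_bounds hβpos hβrec hei (t + 1) 0
  simp only [zero_add] at hlow hup
  have hsum : ∑ i ∈ range (t + 1), (-1) ^ i * e i * β i =
      ((n : ℝ) - 1) * γ - ∑ i ∈ range (t + 1), (e i : ℝ) * p i := by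
    have hrepR : (n : ℝ) - 1 = ∑ i ∈ range (t + 1), (e i : ℝ) * q i := by exact_mod_cast hrep
    rw [hrepR, sum_mul, ← sum_sub_distrib]
    refine sum_congr rfl fun i _ => ?_
    simp only [β, convergentError, ← mul_assoc, mul_comm _ ((-1 : ℝ) ^ i), ← pow_add,
      ← two_mul, pow_mul, neg_one_sq, one_pow, one_mul]
    ring
  have he0' : (e 0 : ℝ) + 1 ≤ a 1 := by exact_mod_cast he0
  rw [hsum, hβ0] at hlow
  rw [hsum, hβ0, hβ1] at hup
  rw [Int.floor_eq_iff]
  push_cast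
  constructor <;> nlinarith

open Finset in
theorem ostrowski_shift_identity_general
    (γ : ℝ) (hγirr : Irrational γ) (hγ0 : 0 < γ)
    -- the continued fraction expansion γ = [0; a₁, a₂, …] via the Gauss map:
    (a : ℕ → ℕ) (x : ℕ → ℝ) (hx0 : x 0 = γ)
    (hgauss : ∀ i : ℕ, (a (i + 1) : ℤ) = ⌊1 / x i⌋ ∧ x (i + 1) = 1 / x i - (a (i + 1) : ℝ))
    -- pure periodicity with period m:
    (m : ℕ) (hm : 1 ≤ m) (haper : ∀ i : ℕ, 1 ≤ i → a (i + m) = a i)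
    -- convergents (with p₋₁ = 1, q₋₁ = 0):
    (p q : ℕ → ℤ)
    (hp0 : p 0 = 0) (hq0 : q 0 = 1)
    (hp1 : p 1 = (a 1 : ℤ) * p 0 + 1) (hq1 : q 1 = (a 1 : ℤ) * q 0 + 0)
    (hp : ∀ i : ℕ, p (i + 2) = (a (i + 2) : ℤ) * p (i + 1) + p i)
    (hq : ∀ i : ℕ, q (i + 2) = (a (i + 2) : ℤ) * q (i + 1) + q i)
    -- the canonical Ostrowski γ-representation of n - 1:
    (n : ℕ) (t : ℕ) (e : ℕ → ℕ)
    (hrep : ((n : ℤ) - 1) = ∑ i ∈ range (t + 1), (e i : ℤ) * q i)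
    (he0 : e 0 < a 1)
    (hei : ∀ i : ℕ, 1 ≤ i → e i ≤ a (i + 1)) :
    ∑ i ∈ range (t + 1), (e i : ℤ) * q (i + m)
      = q m * ((n : ℤ) - 1) + q (m - 1) * ⌊(n : ℝ) * γ⌋ := by
  have hp1' : p 1 = 1 := by simpa [hp0] using hp1
  have hq1' : q 1 = a 1 := by simpa [hq0] using hq1
  rw [floor_mul_eq_sum_digit_mul_num hγirr hγ0 hx0 hgauss hp0 hp1' hq0 hq1' hp hq hrep he0 hei,
    hrep, mul_sum, mul_sum, ← sum_add_distrib]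
  refine sum_congr rfl fun i _ => ?_
  rw [recurrence_shift_of_periodic hm haper hp0 hp1' hq0 hq1' hp hq hq i]
  ring

open Finset in
/-- Theorem 4 of Schaeffer–Shallit–Zorcic: appending `m` zeros to the Ostrowski
γ-representation of `n-1` yields `q_m (n-1) + q_{m-1} ⌊nγ⌋`. -/
theorem ostrowski_shift_identity
    (γ : ℝ) (hγirr : Irrational γ) (hγ0 : 0 < γ) (hγ1 : γ < 1)
    -- the continued fraction expansion γ = [0; a₁, a₂, …] via the Gauss map:
    (a : ℕ → ℕ) (x : ℕ → ℝ) (hx0 : x 0 = γ) (ha0 : a 0 = 0)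
    (hgauss : ∀ i : ℕ, (a (i + 1) : ℤ) = ⌊1 / x i⌋ ∧ x (i + 1) = 1 / x i - (a (i + 1) : ℝ))
    -- pure periodicity with period m:
    (m : ℕ) (hm : 1 ≤ m) (haper : ∀ i : ℕ, 1 ≤ i → a (i + m) = a i)
    -- convergents (with p₋₁ = 1, q₋₁ = 0):
    (p q : ℕ → ℤ)
    (hp0 : p 0 = 0) (hq0 : q 0 = 1)
    (hp1 : p 1 = (a 1 : ℤ) * p 0 + 1) (hq1 : q 1 = (a 1 : ℤ) * q 0 + 0)
    (hp : ∀ i : ℕ, p (i + 2) = (a (i + 2) : ℤ) * p (i + 1) + p i)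
    (hq : ∀ i : ℕ, q (i + 2) = (a (i + 2) : ℤ) * q (i + 1) + q i)
    -- the canonical Ostrowski γ-representation of n - 1:
    (n : ℕ) (hn : 1 ≤ n) (t : ℕ) (e : ℕ → ℕ)
    (hrep : ((n : ℤ) - 1) = ∑ i ∈ range (t + 1), (e i : ℤ) * q i)
    (he0 : e 0 < a 1)
    (hei : ∀ i : ℕ, 1 ≤ i → e i ≤ a (i + 1))
    (hcarry : ∀ i : ℕ, 1 ≤ i → e i = a (i + 1) → e (i - 1) = 0) :
    ∑ i ∈ range (t + 1), (e i : ℤ) * q (i + m)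
      = q m * ((n : ℤ) - 1) + q (m - 1) * ⌊(n : ℝ) * γ⌋ :=
  ostrowski_shift_identity_general γ hγirr hγ0 a x hx0 hgauss m hm haper p q hp0 hq0 hp1 hq1 hp hq n
    t e hrep he0 hei
end

section
/- Let α = (√21 − 1)/2 and β = (√21 + 3)/4. Then every natural number n ≥ 12 can be written as the sum of two elements of the inhomogeneous Beatty sequence (⌊kα + β⌋)_{k≥1}; that is, for every integer n ≥ 12 there exist integers u ≥ 1 and v ≥ 1 such that n = ⌊uα + β⌋ + ⌊vα + β⌋. -/
/-!
Since `1 < α < 2`, consecutive terms of the Beatty sequence `b k = ⌊k α + β⌋` differ by `1` or `2`,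
so for every `m ≥ b 1 = 3` either `m` or `m + 1` is a term. Using `b 4 = 9` and `b 5 = 10`, every
`n ≥ 13` is `b k + b 5` or `b k + b 4` with `b k ∈ {n - 10, n - 9}`, and `12 = b 1 + b 4`.
-/

open Real

noncomputable def inhomBeattySeq (α β : ℝ) (k : ℕ) : ℤ := ⌊(k : ℝ) * α + β⌋

theorem inhomBeattySeq_succ_mem_Icc (α β : ℝ) (k : ℕ) :
    inhomBeattySeq α β (k + 1) ∈
      Set.Icc (inhomBeattySeq α β k + ⌊α⌋) (inhomBeattySeq α β k + ⌊α⌋ + 1) := by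
  have hsucc : ((k + 1 : ℕ) : ℝ) * α + β = ((k : ℝ) * α + β) + α := by push_cast; ring
  unfold inhomBeattySeq
  rw [hsucc]
  exact ⟨Int.le_floor_add _ _, by linarith [Int.le_floor_add_floor ((k : ℝ) * α + β) α]⟩

theorem exists_eq_or_eq_add_one_of_step_le_two (f : ℕ → ℤ)
    (hf : ∀ k, f k < f (k + 1) ∧ f (k + 1) ≤ f k + 2) (k₀ : ℕ) (m : ℤ) (hm : f k₀ ≤ m) :
    ∃ k, k₀ ≤ k ∧ (f k = m ∨ f k = m + 1) := by
  induction m, hm using Int.leInduction with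
  | base => exact ⟨k₀, le_rfl, Or.inl rfl⟩
  | succ m _ ih =>
    obtain ⟨k, hk, hkm | hkm⟩ := ih
    · have := hf k
      exact ⟨k + 1, by omega, by omega⟩
    · exact ⟨k, hk, Or.inl hkm⟩

local notation "b" => (inhomBeattySeq ((√21 - 1) / 2) ((√21 + 3) / 4))

theorem sqrt_21_mem_Ioo : √21 ∈ Set.Ioo (4.58 : ℝ) 4.59 := by
  constructor
  · rw [Real.lt_sqrt (by norm_num)]; norm_num
  · rw [Real.sqrt_lt' (by norm_num)]; norm_num

theorem floor_sqrt_21_sub_one_div_two : ⌊(√21 - 1) / 2⌋ = 1 := by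
  obtain ⟨hlo, hhi⟩ := sqrt_21_mem_Ioo
  rw [Int.floor_eq_iff]
  constructor <;> push_cast <;> linarith

theorem inhomBeattySeq_sqrt_21_step (k : ℕ) : b k < b (k + 1) ∧ b (k + 1) ≤ b k + 2 := by
  have h := inhomBeattySeq_succ_mem_Icc ((√21 - 1) / 2) ((√21 + 3) / 4) k
  rw [floor_sqrt_21_sub_one_div_two] at h
  exact ⟨by linarith [h.1], by linarith [h.2]⟩

theorem inhomBeattySeq_sqrt_21_eq {k : ℕ} {m : ℤ}
    (hlo : (m : ℝ) ≤ k * ((4.58 - 1) / 2) + (4.58 + 3) / 4)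
    (hhi : k * ((4.59 - 1) / 2) + (4.59 + 3) / 4 < (m : ℝ) + 1) : b k = m := by
  obtain ⟨hs, hs'⟩ := sqrt_21_mem_Ioo
  have hk : (0 : ℝ) ≤ k := k.cast_nonneg
  rw [inhomBeattySeq, Int.floor_eq_iff]
  constructor <;> nlinarith

theorem inhomBeattySeq_sqrt_21_one : b 1 = 3 :=
  inhomBeattySeq_sqrt_21_eq (by norm_num) (by norm_num)

theorem inhomBeattySeq_sqrt_21_four : b 4 = 9 :=
  inhomBeattySeq_sqrt_21_eq (by norm_num) (by norm_num)

theorem inhomBeattySeq_sqrt_21_five : b 5 = 10 :=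
  inhomBeattySeq_sqrt_21_eq (by norm_num) (by norm_num)

/-- Every natural number `n ≥ 12` is the sum of two elements of the
inhomogeneous Beatty sequence `⌊k·(√21−1)/2 + (√21+3)/4⌋`, `k ≥ 1`. -/
theorem beatty_sqrt21_sum_of_two :
    ∀ n : ℕ, 12 ≤ n →
      ∃ u v : ℕ, 1 ≤ u ∧ 1 ≤ v ∧
        (n : ℤ) = ⌊(u : ℝ) * ((Real.sqrt 21 - 1) / 2) + (Real.sqrt 21 + 3) / 4⌋
                + ⌊(v : ℝ) * ((Real.sqrt 21 - 1) / 2) + (Real.sqrt 21 + 3) / 4⌋ := by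
  intro n hn
  change ∃ u v : ℕ, 1 ≤ u ∧ 1 ≤ v ∧ (n : ℤ) = b u + b v
  rcases hn.eq_or_lt with rfl | hn
  · refine ⟨1, 4, le_rfl, by norm_num, ?_⟩
    rw [inhomBeattySeq_sqrt_21_one, inhomBeattySeq_sqrt_21_four]; rfl
  obtain ⟨k, hk, hbk | hbk⟩ := exists_eq_or_eq_add_one_of_step_le_two b
    inhomBeattySeq_sqrt_21_step 1 (n - 10) (by rw [inhomBeattySeq_sqrt_21_one]; omega)
  · exact ⟨k, 5, hk, by norm_num, by rw [hbk, inhomBeattySeq_sqrt_21_five]; ring⟩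
  · exact ⟨k, 4, hk, by norm_num, by rw [hbk, inhomBeattySeq_sqrt_21_four]; ring⟩
end

section
/- Let φ = (1 + √5)/2 be the golden ratio, and define c(n) = ⌊nφ + 1/2⌋ for n ≥ 0. Then every natural number n ≠ 1 can be written as the sum of two elements of the sequence c; that is, for every natural number n ≠ 1 there exist natural numbers i, j ≥ 0 with n = ⌊iφ + 1/2⌋ + ⌊jφ + 1/2⌋. -/
/-!
Since `φ φ⁻¹ = 1`, an integer `m ≥ 0` is a value `round (k φ)` of the sequence as soon as `m φ⁻¹`
lies within `φ⁻¹ / 2` of an integer `k`. Write `n φ⁻¹ = r + ε` with `r` the integer nearest to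
`n φ⁻¹`. If `|ε| < φ⁻¹ / 2`, then `n` itself is a value; otherwise subtracting `2 = c(1)` (when
`ε > 0`) or `6 = c(4)` (when `ε < 0`) shifts `ε` by `1 - 2 φ⁻¹ ≈ -0.236` or `4 - 6 φ⁻¹ ≈ 0.292`
into that window. Below `6` the representations are explicit, `1` being the only exception.
-/

open Real goldenRatio

noncomputable def A007067 (n : ℕ) : ℤ := round (n * φ)

theorem eight_fifths_lt_goldenRatio : 8 / 5 < φ := by
  have : (11 / 5 : ℝ) < √5 := Real.lt_sqrt_of_sq_lt (by norm_num)
  unfold goldenRatio; linarith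

theorem goldenRatio_lt_thirteen_eighths : φ < 13 / 8 := by
  have : √5 < 9 / 4 := (Real.sqrt_lt' (by norm_num)).2 (by norm_num)
  unfold goldenRatio; linarith

theorem inv_goldenRatio_eq_sub_one : φ⁻¹ = φ - 1 := by
  rw [inv_goldenRatio, ← one_sub_goldenRatio]; ring

theorem A007067_eq_of_abs_sub_lt {i : ℕ} {m : ℤ} (h : |i * φ - m| < 1 / 2) : A007067 i = m := by
  rw [A007067, round_eq_iff, Set.mem_Ico]
  constructor <;> linarith [abs_lt.1 h]

theorem A007067_zero : A007067 0 = 0 := by simp [A007067]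

theorem A007067_one : A007067 1 = 2 :=
  A007067_eq_of_abs_sub_lt <| abs_lt.2 <| by
    push_cast
    constructor <;> linarith [eight_fifths_lt_goldenRatio, goldenRatio_lt_thirteen_eighths]

theorem A007067_two : A007067 2 = 3 :=
  A007067_eq_of_abs_sub_lt <| abs_lt.2 <| by
    push_cast
    constructor <;> linarith [eight_fifths_lt_goldenRatio, goldenRatio_lt_thirteen_eighths]

theorem A007067_three : A007067 3 = 5 :=
  A007067_eq_of_abs_sub_lt <| abs_lt.2 <| by
    push_cast
    constructor <;> linarith [eight_fifths_lt_goldenRatio, goldenRatio_lt_thirteen_eighths]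

theorem A007067_four : A007067 4 = 6 :=
  A007067_eq_of_abs_sub_lt <| abs_lt.2 <| by
    push_cast
    constructor <;> linarith [eight_fifths_lt_goldenRatio, goldenRatio_lt_thirteen_eighths]

theorem mem_range_A007067_of_abs_sub_lt {m k : ℤ} (hm : 0 ≤ m) (h : |m * φ⁻¹ - k| < φ⁻¹ / 2) :
    m ∈ Set.range A007067 := by
  have hmk : |k * φ - m| < 1 / 2 := by
    calc |k * φ - m| = |φ * (m * φ⁻¹ - k)| := by rw [abs_sub_comm]; congr 1; field_simp
      _ = φ * |m * φ⁻¹ - k| := by rw [abs_mul, abs_of_pos goldenRatio_pos]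
      _ < φ * (φ⁻¹ / 2) := by gcongr
      _ = 1 / 2 := by field_simp
  have hk : 0 ≤ k := by
    have : (-1 : ℝ) < k := by
      nlinarith [abs_lt.1 hmk, one_lt_goldenRatio, (by exact_mod_cast hm : (0 : ℝ) ≤ m)]
    have : (-1 : ℤ) < k := by exact_mod_cast this
    omega
  have hk' : ((k.toNat : ℕ) : ℝ) = k := by exact_mod_cast Int.toNat_of_nonneg hk
  exact ⟨k.toNat, A007067_eq_of_abs_sub_lt (by rwa [hk'])⟩

theorem exists_A007067_add_A007067_eq_of_six_le {n : ℕ} (hn : 6 ≤ n) :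
    ∃ i j, A007067 i + A007067 j = n := by
  have hlo : 3 / 5 < φ⁻¹ := by
    rw [inv_goldenRatio_eq_sub_one]; linarith [eight_fifths_lt_goldenRatio]
  have hhi : φ⁻¹ < 5 / 8 := by
    rw [inv_goldenRatio_eq_sub_one]; linarith [goldenRatio_lt_thirteen_eighths]
  set r := round (n * φ⁻¹)
  have hε : |n * φ⁻¹ - r| ≤ 1 / 2 := abs_sub_round _
  rcases lt_or_ge |n * φ⁻¹ - r| (φ⁻¹ / 2) with hnear | hfar
  · obtain ⟨i, hi⟩ :=
      mem_range_A007067_of_abs_sub_lt (m := n) (by positivity) (by simpa using hnear)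
    exact ⟨i, 0, by rw [hi, A007067_zero, add_zero]⟩
  rcases le_or_gt 0 (n * φ⁻¹ - r) with hpos | hneg
  · rw [abs_of_nonneg hpos] at hε hfar
    obtain ⟨i, hi⟩ := mem_range_A007067_of_abs_sub_lt (m := n - 2) (k := r - 1) (by omega) <| by
      rw [abs_lt]; push_cast; constructor <;> linarith
    exact ⟨i, 1, by rw [hi, A007067_one]; ring⟩
  · rw [abs_of_neg hneg] at hε hfar
    obtain ⟨i, hi⟩ := mem_range_A007067_of_abs_sub_lt (m := n - 6) (k := r - 4) (by omega) <| by
      rw [abs_lt]; push_cast; constructor <;> linarith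
    exact ⟨i, 4, by rw [hi, A007067_four]; ring⟩

theorem exists_A007067_add_A007067_eq {n : ℕ} (hn : n ≠ 1) : ∃ i j, A007067 i + A007067 j = n := by
  rcases le_or_gt 6 n with h6 | h6
  · exact exists_A007067_add_A007067_eq_of_six_le h6
  interval_cases n
  · exact ⟨0, 0, by simp [A007067_zero]⟩
  · exact absurd rfl hn
  · exact ⟨1, 0, by simp [A007067_zero, A007067_one]⟩
  · exact ⟨2, 0, by simp [A007067_zero, A007067_two]⟩
  · exact ⟨1, 1, by simp [A007067_one]⟩
  · exact ⟨3, 0, by simp [A007067_zero, A007067_three]⟩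

/-- Every natural number `n ≠ 1` is the sum of two elements of the sequence
`c(n) = ⌊nφ + 1/2⌋` (OEIS A007067), where `φ` is the golden ratio. -/
theorem sum_of_two_A007067 :
    ∀ n : ℕ, n ≠ 1 →
      ∃ i j : ℕ,
        (n : ℤ) = ⌊(i : ℝ) * ((1 + Real.sqrt 5) / 2) + 1 / 2⌋
                + ⌊(j : ℝ) * ((1 + Real.sqrt 5) / 2) + 1 / 2⌋ := by
  intro n hn
  obtain ⟨i, j, hij⟩ := exists_A007067_add_A007067_eq hn
  exact ⟨i, j, by simpa only [A007067, round_eq] using hij.symm⟩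
end

section
/- Let α = (3 − √5)/2, and define the Fibonacci word f : ℕ → ℤ by f(n) = ⌊(n+2)α⌋ − ⌊(n+1)α⌋. Let s = (√5 − 1)/2 and t = (1 + √5)/2, and define a(k) = k + ⌊ks/2⌋ + ⌊kt/2⌋. Then for every integer n ≥ 1, the following are equivalent: (1) there exists i ≥ 0 with f(i) = f(i + (n+1)) = f(i + 2(n+1)) = 0 and there is no j ≥ 0 with f(j) = f(j + (n+1)) = f(j + 2(n+1)) = 1; (2) there exists an integer k ≥ 1 with n = a(k). -/
/-!
The Fibonacci word codes the rotation by `α` of the circle `ℝ/ℤ`: `f i = 1` exactly when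
`{(i + 1)α} ∈ [1 - α, 1)`. With `X = {dα}`, a monochromatic progression `i, i + d, i + 2d` is thus
a point `y` of the (dense) orbit of `0` such that `y, y + X, y + 2X` all lie in `[0, 1 - α)`, or
all in `[1 - α, 1)`, modulo `1`. Interval arithmetic shows that for irrational `α` there is a
progression of `0`s but none of `1`s exactly when `X` lies in the window
`(α/2, (1-α)/2) ∪ (α, 1-α) ∪ ((1+α)/2, 1-α/2)`.

For `α = (3 - √5)/2` we have `s = 1 - α`, `t = 2 - α` and `α² = 3α - 1`. These let one compute
`a(k)` and `{(a(k) + 1)α}` from `⌊kα/2⌋` and `{kα/2}`, which puts `{(a(k) + 1)α}` in the window.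
Conversely, if `{(n + 1)α}` is in the window, then `k = 2(n - 2⌊(n + 1)α⌋) + e` satisfies
`a(k) = n`, where `e = 1, 0, -1` according to the interval of the window containing `{(n + 1)α}`.
-/

open Set

theorem Irrational.exists_fract_nat_mul_mem_Ioo {α : ℝ} (h : Irrational α) {u v : ℝ}
    (hu : 0 ≤ u) (huv : u < v) (hv : v ≤ 1) : ∃ m : ℕ, Int.fract (m * α) ∈ Ioo u v := by
  have hdense : DenseRange fun m : ℕ ↦ m • (α : AddCircle (1 : ℝ)) :=
    denseRange_zsmul_iff_nsmul.1 (AddCircle.denseRange_zsmul_coe_iff.2 (by simpa using h))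
  obtain ⟨m, y, hy, hym⟩ := hdense.exists_mem_open
    (QuotientAddGroup.isOpenMap_coe _ isOpen_Ioo) ((nonempty_Ioo.2 huv).image _)
  obtain ⟨z, hz⟩ := QuotientAddGroup.eq.1 (hym.trans (AddCircle.coe_nsmul (p := 1)).symm)
  refine ⟨m, Int.fract_eq_iff.2 ⟨hu.trans hy.1.le, hy.2.trans_le hv, z, ?_⟩ ▸ hy⟩
  simp only [zsmul_eq_mul, mul_one, nsmul_eq_mul] at hz
  linarith

noncomputable def rotationCode (α x : ℝ) : ℤ := if 1 - α ≤ Int.fract x then 1 else 0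

noncomputable def sturmian (α : ℝ) (n : ℕ) : ℤ := ⌊((n : ℝ) + 2) * α⌋ - ⌊((n : ℝ) + 1) * α⌋

def HasMonoAP (w : ℕ → ℤ) (c : ℤ) (d : ℕ) : Prop :=
  ∃ i, w i = c ∧ w (i + d) = c ∧ w (i + 2 * d) = c

def IsMonoTriple (α : ℝ) (c : ℤ) (X y : ℝ) : Prop :=
  rotationCode α y = c ∧ rotationCode α (y + X) = c ∧ rotationCode α (y + 2 * X) = c

def rebleWindow (α : ℝ) : Set ℝ :=
  Ioo (α / 2) ((1 - α) / 2) ∪ Ioo α (1 - α) ∪ Ioo ((1 + α) / 2) (1 - α / 2)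

section RotationCode

variable {α : ℝ}

theorem rotationCode_eq_one_iff_of_le_of_lt {x : ℝ} {l : ℤ} (h₁ : l ≤ x) (h₂ : x < l + 1) :
    rotationCode α x = 1 ↔ l + 1 - α ≤ x := by
  rw [rotationCode, ← Int.self_sub_floor, Int.floor_eq_iff.2 ⟨h₁, h₂⟩]
  split_ifs with h <;> simp only [true_iff, Int.reduceEq, false_iff] <;> linarith

theorem rotationCode_eq_zero_iff_of_le_of_lt {x : ℝ} {l : ℤ} (h₁ : l ≤ x) (h₂ : x < l + 1) :
    rotationCode α x = 0 ↔ x < l + 1 - α := by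
  rw [rotationCode, ← Int.self_sub_floor, Int.floor_eq_iff.2 ⟨h₁, h₂⟩]
  split_ifs with h <;> simp only [true_iff, Int.reduceEq, false_iff] <;> linarith

theorem rotationCode_congr {x x' : ℝ} {z : ℤ} (h : x - x' = z) :
    rotationCode α x = rotationCode α x' := by
  rw [rotationCode, rotationCode, Int.fract_eq_fract.2 ⟨z, h⟩]

theorem floor_add_sub_floor_eq_rotationCode (h₀ : 0 ≤ α) (h₁ : α ≤ 1) (x : ℝ) :
    ⌊x + α⌋ - ⌊x⌋ = rotationCode α x := by
  have hx₁ := Int.floor_le x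
  have hx₂ := Int.lt_floor_add_one x
  by_cases h : ⌊x⌋ + 1 - α ≤ x
  · rw [(rotationCode_eq_one_iff_of_le_of_lt hx₁ hx₂).2 h,
      (Int.floor_eq_iff (z := ⌊x⌋ + 1)).2 ⟨by push_cast; linarith, by push_cast; linarith⟩]
    ring
  · rw [(rotationCode_eq_zero_iff_of_le_of_lt hx₁ hx₂).2 (not_le.1 h),
      (Int.floor_eq_iff (z := ⌊x⌋)).2 ⟨by linarith, by linarith⟩]
    ring

end RotationCode

section SturmianAP

variable {α : ℝ}

theorem sturmian_eq_rotationCode (h₀ : 0 ≤ α) (h₁ : α ≤ 1) (n : ℕ) :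
    sturmian α n = rotationCode α ((n + 1) * α) := by
  rw [sturmian, ← floor_add_sub_floor_eq_rotationCode h₀ h₁]
  ring_nf

theorem isMonoTriple_fract_iff {c : ℤ} {X y : ℝ} :
    IsMonoTriple α c (Int.fract X) (Int.fract y) ↔ IsMonoTriple α c X y := by
  have hy := Int.self_sub_fract y
  have hX := Int.self_sub_fract X
  unfold IsMonoTriple
  rw [rotationCode_congr (x := Int.fract y) (x' := y) (z := -⌊y⌋) (by push_cast; linarith),
    rotationCode_congr (x := Int.fract y + Int.fract X) (x' := y + X) (z := -⌊y⌋ - ⌊X⌋)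
      (by push_cast; linarith),
    rotationCode_congr (x := Int.fract y + 2 * Int.fract X) (x' := y + 2 * X)
      (z := -⌊y⌋ - 2 * ⌊X⌋) (by push_cast; linarith)]

theorem sturmian_triple_iff_isMonoTriple (h₀ : 0 ≤ α) (h₁ : α ≤ 1) (c : ℤ) (i d : ℕ) :
    (sturmian α i = c ∧ sturmian α (i + d) = c ∧ sturmian α (i + 2 * d) = c) ↔
      IsMonoTriple α c (Int.fract (d * α)) (Int.fract ((i + 1 : ℕ) * α)) := by
  rw [isMonoTriple_fract_iff, IsMonoTriple]
  simp only [sturmian_eq_rotationCode h₀ h₁]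
  push_cast
  ring_nf

theorem Irrational.hasMonoAP_sturmian_of_forall_mem_Ioo (hα : Irrational α) (h₀ : 0 ≤ α)
    (h₁ : α ≤ 1) {c : ℤ} {d : ℕ} {u v : ℝ} (hu : 0 ≤ u) (huv : u < v) (hv : v ≤ 1)
    (h : ∀ y ∈ Ioo u v, IsMonoTriple α c (Int.fract (d * α)) y) :
    HasMonoAP (sturmian α) c d := by
  obtain ⟨m, hm⟩ := hα.exists_fract_nat_mul_mem_Ioo hu huv hv
  obtain ⟨i, rfl⟩ : ∃ i, m = i + 1 := Nat.exists_eq_succ_of_ne_zero <| by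
    rintro rfl
    simp only [CharP.cast_eq_zero, zero_mul, Int.fract_zero, mem_Ioo] at hm
    linarith [hm.1]
  exact ⟨i, (sturmian_triple_iff_isMonoTriple h₀ h₁ c i d).2 (h _ hm)⟩

theorem not_hasMonoAP_sturmian (h₀ : 0 ≤ α) (h₁ : α ≤ 1) {c : ℤ} {d : ℕ}
    (h : ∀ y ∈ Ico 0 1, ¬IsMonoTriple α c (Int.fract (d * α)) y) :
    ¬HasMonoAP (sturmian α) c d := fun ⟨i, hi⟩ ↦
  h _ ⟨Int.fract_nonneg _, Int.fract_lt_one _⟩ ((sturmian_triple_iff_isMonoTriple h₀ h₁ c i d).1 hi)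

end SturmianAP

section Window

variable {α X : ℝ}

theorem rebleWindow_subset_Ioo (h₀ : 0 ≤ α) : rebleWindow α ⊆ Ioo 0 1 := by
  rintro x ((⟨h₁, h₂⟩ | ⟨h₁, h₂⟩) | ⟨h₁, h₂⟩) <;> constructor <;> linarith

theorem not_isMonoTriple_one_of_mem_rebleWindow (hX : X ∈ rebleWindow α) {y : ℝ}
    (hy : y ∈ Ico 0 1) : ¬IsMonoTriple α 1 X y := by
  rintro ⟨h₀, h₁, h₂⟩
  obtain ⟨hy₀, hy₁⟩ := hy
  rw [rotationCode_eq_one_iff_of_le_of_lt (l := 0) (by simpa) (by simpa)] at h₀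
  push_cast at h₀
  simp only [rebleWindow, mem_union, mem_Ioo] at hX
  rcases hX with (⟨hX₁, hX₂⟩ | ⟨hX₁, hX₂⟩) | ⟨hX₁, hX₂⟩
  · rw [rotationCode_eq_one_iff_of_le_of_lt (l := 1) (by push_cast; linarith)
      (by push_cast; linarith)] at h₂
    push_cast at h₂; linarith
  · rw [rotationCode_eq_one_iff_of_le_of_lt (l := 1) (by push_cast; linarith)
      (by push_cast; linarith)] at h₁
    push_cast at h₁; linarith
  · rw [rotationCode_eq_one_iff_of_le_of_lt (l := 2) (by push_cast; linarith)
      (by push_cast; linarith)] at h₂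
    push_cast at h₂; linarith

theorem not_isMonoTriple_zero_of_mem_Icc
    (hX : X ∈ Icc ((1 - α) / 2) α ∪ Icc (1 - α) ((1 + α) / 2)) {y : ℝ}
    (hy : y ∈ Ico 0 1) : ¬IsMonoTriple α 0 X y := by
  rintro ⟨h₀, h₁, h₂⟩
  obtain ⟨hy₀, hy₁⟩ := hy
  rw [rotationCode_eq_zero_iff_of_le_of_lt (l := 0) (by simpa) (by simpa)] at h₀
  push_cast at h₀
  rcases hX with ⟨hX₁, hX₂⟩ | ⟨hX₁, hX₂⟩
  · rcases lt_or_ge (y + 2 * X) 1 with h | h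
    · rw [rotationCode_eq_zero_iff_of_le_of_lt (l := 0) (by push_cast; linarith)
        (by push_cast; linarith)] at h₂
      push_cast at h₂; linarith
    · rw [rotationCode_eq_zero_iff_of_le_of_lt (l := 0) (by push_cast; linarith)
        (by push_cast; linarith)] at h₁
      push_cast at h₁; linarith
  · rcases lt_or_ge (y + X) 1 with h | h
    · rw [rotationCode_eq_zero_iff_of_le_of_lt (l := 0) (by push_cast; linarith)
        (by push_cast; linarith)] at h₁
      push_cast at h₁; linarith
    · rw [rotationCode_eq_zero_iff_of_le_of_lt (l := 1) (by push_cast; linarith)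
        (by push_cast; linarith)] at h₂
      push_cast at h₂; linarith

theorem exists_Ioo_isMonoTriple_zero_of_mem_rebleWindow (h₀ : 0 ≤ α)
    (hX : X ∈ rebleWindow α) :
    ∃ u v, 0 ≤ u ∧ u < v ∧ v ≤ 1 ∧ ∀ y ∈ Ioo u v, IsMonoTriple α 0 X y := by
  simp only [rebleWindow, mem_union, mem_Ioo] at hX
  rcases hX with (⟨hX₁, hX₂⟩ | ⟨hX₁, hX₂⟩) | ⟨hX₁, hX₂⟩
  · refine ⟨0, 1 - α - 2 * X, le_rfl, by linarith, by linarith, fun y ⟨hy₁, hy₂⟩ ↦ ?_⟩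
    refine ⟨(rotationCode_eq_zero_iff_of_le_of_lt (l := 0) ?_ ?_).2 ?_,
      (rotationCode_eq_zero_iff_of_le_of_lt (l := 0) ?_ ?_).2 ?_,
      (rotationCode_eq_zero_iff_of_le_of_lt (l := 0) ?_ ?_).2 ?_⟩ <;>
      push_cast <;> linarith
  · rcases le_total X (1 / 2) with hX | hX
    · refine ⟨1 - 2 * X, 1 - α - X, by linarith, by linarith, by linarith,
        fun y ⟨hy₁, hy₂⟩ ↦ ?_⟩
      refine ⟨(rotationCode_eq_zero_iff_of_le_of_lt (l := 0) ?_ ?_).2 ?_,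
        (rotationCode_eq_zero_iff_of_le_of_lt (l := 0) ?_ ?_).2 ?_,
        (rotationCode_eq_zero_iff_of_le_of_lt (l := 1) ?_ ?_).2 ?_⟩ <;>
      push_cast <;> linarith
    · refine ⟨1 - X, 2 - 2 * X - α, by linarith, by linarith, by linarith,
        fun y ⟨hy₁, hy₂⟩ ↦ ?_⟩
      refine ⟨(rotationCode_eq_zero_iff_of_le_of_lt (l := 0) ?_ ?_).2 ?_,
        (rotationCode_eq_zero_iff_of_le_of_lt (l := 1) ?_ ?_).2 ?_,
        (rotationCode_eq_zero_iff_of_le_of_lt (l := 1) ?_ ?_).2 ?_⟩ <;>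
      push_cast <;> linarith
  · refine ⟨2 - 2 * X, 1 - α, by linarith, by linarith, by linarith, fun y ⟨hy₁, hy₂⟩ ↦ ?_⟩
    refine ⟨(rotationCode_eq_zero_iff_of_le_of_lt (l := 0) ?_ ?_).2 ?_,
      (rotationCode_eq_zero_iff_of_le_of_lt (l := 1) ?_ ?_).2 ?_,
      (rotationCode_eq_zero_iff_of_le_of_lt (l := 2) ?_ ?_).2 ?_⟩ <;>
      push_cast <;> linarith

theorem exists_Ioo_isMonoTriple_one_of_mem_Ioo (h₁ : α ≤ 1)
    (hX : X ∈ Ioo 0 (α / 2) ∪ Ioo (1 - α / 2) 1) :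
    ∃ u v, 0 ≤ u ∧ u < v ∧ v ≤ 1 ∧ ∀ y ∈ Ioo u v, IsMonoTriple α 1 X y := by
  rcases hX with ⟨hX₁, hX₂⟩ | ⟨hX₁, hX₂⟩
  · refine ⟨1 - α, 1 - 2 * X, by linarith, by linarith, by linarith, fun y ⟨hy₁, hy₂⟩ ↦ ?_⟩
    refine ⟨(rotationCode_eq_one_iff_of_le_of_lt (l := 0) ?_ ?_).2 ?_,
      (rotationCode_eq_one_iff_of_le_of_lt (l := 0) ?_ ?_).2 ?_,
      (rotationCode_eq_one_iff_of_le_of_lt (l := 0) ?_ ?_).2 ?_⟩ <;>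
      push_cast <;> linarith
  · refine ⟨3 - α - 2 * X, 1, by linarith, by linarith, le_rfl, fun y ⟨hy₁, hy₂⟩ ↦ ?_⟩
    refine ⟨(rotationCode_eq_one_iff_of_le_of_lt (l := 0) ?_ ?_).2 ?_,
      (rotationCode_eq_one_iff_of_le_of_lt (l := 1) ?_ ?_).2 ?_,
      (rotationCode_eq_one_iff_of_le_of_lt (l := 2) ?_ ?_).2 ?_⟩ <;>
      push_cast <;> linarith

theorem Irrational.fract_nat_mul_mem_of_notMem_rebleWindow (hα : Irrational α) {d : ℕ}
    (hd : 0 < d) (hX : Int.fract (d * α) ∉ rebleWindow α) :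
    Int.fract (d * α) ∈ Ioo 0 (α / 2) ∪ Ioo (1 - α / 2) 1 ∨
      Int.fract (d * α) ∈ Icc ((1 - α) / 2) α ∪ Icc (1 - α) ((1 + α) / 2) := by
  have hne : ∀ p q : ℤ, p ≠ 0 → (p : ℝ) * α ≠ q := fun p q hp ↦ (hα.intCast_mul hp).ne_int q
  have hdX := Int.self_sub_fract (d * α)
  have h0 : Int.fract (d * α) ≠ 0 := fun h ↦
    hne d ⌊d * α⌋ (by omega) (by push_cast; linarith)
  have h1 : Int.fract (d * α) ≠ α / 2 := fun h ↦
    hne (2 * d - 1) (2 * ⌊d * α⌋) (by omega) (by push_cast; linarith)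
  have h2 : Int.fract (d * α) ≠ 1 - α / 2 := fun h ↦
    hne (2 * d + 1) (2 * ⌊d * α⌋ + 2) (by omega) (by push_cast; linarith)
  have := Int.fract_nonneg (d * α)
  have := Int.fract_lt_one (d * α)
  simp only [rebleWindow, mem_union, mem_Ioo, mem_Icc, not_or, not_and_or, not_lt] at hX ⊢
  grind

theorem Irrational.sturmian_hasMonoAP_iff (hα : Irrational α) (h₀ : 0 ≤ α) (h₁ : α ≤ 1)
    {d : ℕ} (hd : 0 < d) :
    HasMonoAP (sturmian α) 0 d ∧ ¬HasMonoAP (sturmian α) 1 d ↔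
      Int.fract (d * α) ∈ rebleWindow α := by
  constructor
  · rintro ⟨hzero, hone⟩
    by_contra hX
    rcases hα.fract_nat_mul_mem_of_notMem_rebleWindow hd hX with hX | hX
    · obtain ⟨u, v, hu, huv, hv, h⟩ := exists_Ioo_isMonoTriple_one_of_mem_Ioo h₁ hX
      exact hone (hα.hasMonoAP_sturmian_of_forall_mem_Ioo h₀ h₁ hu huv hv h)
    · exact not_hasMonoAP_sturmian h₀ h₁ (fun y ↦ not_isMonoTriple_zero_of_mem_Icc hX) hzero
  · intro hX
    obtain ⟨u, v, hu, huv, hv, h⟩ := exists_Ioo_isMonoTriple_zero_of_mem_rebleWindow h₀ hX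
    exact ⟨hα.hasMonoAP_sturmian_of_forall_mem_Ioo h₀ h₁ hu huv hv h,
      not_hasMonoAP_sturmian h₀ h₁ fun y ↦ not_isMonoTriple_one_of_mem_rebleWindow hX⟩

end Window

noncomputable def fibSlope : ℝ := (3 - √5) / 2

noncomputable def a189377 (k : ℕ) : ℤ :=
  k + ⌊k * ((√5 - 1) / 2) / 2⌋ + ⌊k * ((1 + √5) / 2) / 2⌋

theorem fibSlope_mul_self : fibSlope * fibSlope = 3 * fibSlope - 1 := by
  unfold fibSlope; ring_nf; rw [Real.sq_sqrt (by norm_num)]; ring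

theorem irrational_fibSlope : Irrational fibSlope := by
  convert Real.goldenConj_irrational.natCast_add 1 using 1
  unfold fibSlope Real.goldenConj; push_cast; ring

theorem fibSlope_pos : 0 < fibSlope := by
  unfold fibSlope
  nlinarith [Real.sq_sqrt (show (0 : ℝ) ≤ 5 by norm_num), Real.sqrt_nonneg 5]

theorem fibSlope_lt_half : fibSlope < 1 / 2 := by
  unfold fibSlope
  nlinarith [Real.sq_sqrt (show (0 : ℝ) ≤ 5 by norm_num), Real.sqrt_nonneg 5]

theorem a189377_eq (k : ℕ) :
    a189377 k = k + ⌊k * (1 - fibSlope) / 2⌋ + ⌊k * (2 - fibSlope) / 2⌋ := by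
  unfold a189377 fibSlope; ring_nf

-- `e = 0` for even `k`; for odd `k`, `e = -1` or `e = 1` according as `{kα/2} < 1/2` or `> 1/2`.
theorem exists_two_mul_a189377_eq {k : ℕ} (hk : 0 < k) :
    ∃ e : ℤ, 2 * a189377 k = 5 * k - 4 - e - 4 * ⌊k * fibSlope / 2⌋ ∧
      1 - (2 + e) * fibSlope / 2 - Int.fract (k * fibSlope / 2) * (1 - 2 * fibSlope) ∈
        rebleWindow fibSlope := by
  have h0 := fibSlope_pos
  have h12 : 0 < 1 - 2 * fibSlope := by linarith [fibSlope_lt_half]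
  have hne : ∀ p q : ℤ, p ≠ 0 → (p : ℝ) * fibSlope ≠ q :=
    fun p q hp ↦ (irrational_fibSlope.intCast_mul hp).ne_int q
  set K := ⌊k * fibSlope / 2⌋
  set w := Int.fract (k * fibSlope / 2)
  have hKw : k * fibSlope / 2 = K + w := (Int.floor_add_fract _).symm
  have hw₀ : 0 < w := (Int.fract_nonneg _).lt_of_ne' fun h ↦
    hne k (2 * K) (by omega) (by push_cast; linarith)
  have hw₁ : w < 1 := Int.fract_lt_one _
  have hw : w ≠ 1 / 2 := fun h ↦ hne k (2 * K + 1) (by omega) (by push_cast; linarith)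
  have h₂ : ⌊k * (2 - fibSlope) / 2⌋ = k - K - 1 :=
    Int.floor_eq_iff.2 ⟨by push_cast; linarith, by push_cast; linarith⟩
  suffices ∃ e : ℤ, 2 * ⌊k * (1 - fibSlope) / 2⌋ = k - 2 - e - 2 * K ∧
      1 - (2 + e) * fibSlope / 2 - w * (1 - 2 * fibSlope) ∈ rebleWindow fibSlope by
    obtain ⟨e, h₁, hY⟩ := this
    exact ⟨e, by rw [a189377_eq, h₂]; omega, hY⟩
  obtain ⟨m, rfl | rfl⟩ := Nat.even_or_odd' k
  · refine ⟨0, ?_, ?_⟩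
    · rw [(Int.floor_eq_iff (z := m - K - 1)).2 ⟨by push_cast at hKw ⊢; linarith,
        by push_cast at hKw ⊢; linarith⟩]
      push_cast; ring
    · left; right
      constructor <;> push_cast <;> nlinarith [mul_pos hw₀ h12, mul_pos (sub_pos.2 hw₁) h12]
  · rcases lt_or_gt_of_ne hw with hw | hw
    · refine ⟨-1, ?_, ?_⟩
      · rw [(Int.floor_eq_iff (z := m - K)).2 ⟨by push_cast at hKw ⊢; linarith,
          by push_cast at hKw ⊢; linarith⟩]
        push_cast; ring
      · right
        constructor <;> push_cast <;> nlinarith [mul_pos hw₀ h12, mul_pos (sub_pos.2 hw) h12]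
    · refine ⟨1, ?_, ?_⟩
      · rw [(Int.floor_eq_iff (z := m - K - 1)).2 ⟨by push_cast at hKw ⊢; linarith,
          by push_cast at hKw ⊢; linarith⟩]
        push_cast; ring
      · left; left
        constructor <;> push_cast <;>
          nlinarith [mul_pos (sub_pos.2 hw) h12, mul_pos (sub_pos.2 hw₁) h12]

theorem fract_a189377_add_one_mul_mem_rebleWindow {k : ℕ} (hk : 0 < k) :
    Int.fract ((a189377 k + 1) * fibSlope) ∈ rebleWindow fibSlope := by
  obtain ⟨e, ha, hY⟩ := exists_two_mul_a189377_eq hk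
  obtain ⟨hY₀, hY₁⟩ := rebleWindow_subset_Ioo fibSlope_pos.le hY
  convert hY using 1
  refine Int.fract_eq_iff.2 ⟨hY₀.le, hY₁, k - ⌊k * fibSlope / 2⌋ - 1, ?_⟩
  have ha' : 2 * (a189377 k : ℝ) = 5 * k - 4 - e - 4 * ⌊k * fibSlope / 2⌋ := by
    exact_mod_cast ha
  push_cast
  linear_combination (fibSlope / 2) * ha' - (2 * fibSlope - 1) *
    Int.floor_add_fract (k * fibSlope / 2) - k * fibSlope_mul_self

theorem exists_a189377_eq_of_mem_Ico {n : ℕ} {N : ℤ} {X : ℝ}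
    (hNX : ((n : ℝ) + 1) * fibSlope = N + X) {e : ℤ} (he : (0 : ℝ) < 2 * (n - 2 * N) + e)
    (h₁ : X * (5 - 2 * fibSlope) + (2 - e) * fibSlope / 2 - 2 + 3 * e / 2 ∈ Ico 0 1)
    (h₂ : X * (5 - 2 * fibSlope) + (2 - e) * fibSlope / 2 - 2 + e ∈ Ico 0 1) :
    ∃ k : ℕ, 1 ≤ k ∧ (n : ℤ) = a189377 k := by
  have hq := fibSlope_mul_self
  have he' : 0 < 2 * (n - 2 * N) + e := by exact_mod_cast he
  obtain ⟨k, hk⟩ : ∃ k : ℕ, (k : ℤ) = 2 * (n - 2 * N) + e := ⟨_, Int.toNat_of_nonneg he'.le⟩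
  have hk' : (k : ℝ) = 2 * (n - 2 * N) + e := by exact_mod_cast hk
  have hfl₁ : ⌊k * (1 - fibSlope) / 2⌋ = 3 * N - n - e := by
    have : k * (1 - fibSlope) / 2 = (3 * N - n - e) +
        (X * (5 - 2 * fibSlope) + (2 - e) * fibSlope / 2 - 2 + 3 * e / 2) := by
      linear_combination
        ((1 - fibSlope) / 2) * hk' + (5 - 2 * fibSlope) * hNX + 2 * (n + 1) * hq
    exact Int.floor_eq_iff.2 ⟨by push_cast; linarith [h₁.1], by push_cast; linarith [h₁.2]⟩
  have hfl₂ : ⌊k * (2 - fibSlope) / 2⌋ = N := by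
    have : k * (2 - fibSlope) / 2 =
        N + (X * (5 - 2 * fibSlope) + (2 - e) * fibSlope / 2 - 2 + e) := by
      linear_combination
        ((2 - fibSlope) / 2) * hk' + (5 - 2 * fibSlope) * hNX + 2 * (n + 1) * hq
    exact Int.floor_eq_iff.2 ⟨by linarith [h₂.1], by linarith [h₂.2]⟩
  refine ⟨k, by omega, ?_⟩
  rw [a189377_eq, hfl₁, hfl₂]
  omega

theorem exists_a189377_eq_of_mem_rebleWindow {n : ℕ}
    (hX : Int.fract ((n + 1) * fibSlope) ∈ rebleWindow fibSlope) :
    ∃ k : ℕ, 1 ≤ k ∧ (n : ℤ) = a189377 k := by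
  have hq := fibSlope_mul_self
  have h0 := fibSlope_pos
  have h12 := fibSlope_lt_half
  set N := ⌊(n + 1) * fibSlope⌋
  set X := Int.fract ((n + 1) * fibSlope)
  have hNX : ((n : ℝ) + 1) * fibSlope = N + X := (Int.floor_add_fract _).symm
  have hN : (0 : ℝ) ≤ N := by exact_mod_cast Int.floor_nonneg.2 (by positivity)
  have hm : (n : ℝ) - 2 * N = N * (1 - fibSlope) + X * (3 - fibSlope) - 1 := by
    linear_combination (3 - fibSlope) * hNX + (n + 1) * hq
  have hN' : 0 ≤ N * (1 - fibSlope) := mul_nonneg hN (by linarith)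
  simp only [rebleWindow, mem_union, mem_Ioo] at hX
  rcases hX with (⟨hX₁, hX₂⟩ | ⟨hX₁, hX₂⟩) | ⟨hX₁, hX₂⟩
  · refine exists_a189377_eq_of_mem_Ico hNX (e := 1) ?_ ⟨?_, ?_⟩ ⟨?_, ?_⟩ <;> push_cast <;>
      nlinarith
  · refine exists_a189377_eq_of_mem_Ico hNX (e := 0) ?_ ⟨?_, ?_⟩ ⟨?_, ?_⟩ <;> push_cast <;>
      nlinarith
  · refine exists_a189377_eq_of_mem_Ico hNX (e := -1) ?_ ⟨?_, ?_⟩ ⟨?_, ?_⟩ <;> push_cast <;>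
      nlinarith

theorem fract_mem_rebleWindow_iff (n : ℕ) :
    Int.fract ((n + 1) * fibSlope) ∈ rebleWindow fibSlope ↔
      ∃ k : ℕ, 1 ≤ k ∧ (n : ℤ) = a189377 k := by
  refine ⟨exists_a189377_eq_of_mem_rebleWindow, fun ⟨k, hk, hn⟩ ↦ ?_⟩
  rw [show (n : ℝ) = a189377 k by exact_mod_cast hn]
  exact fract_a189377_add_one_mul_mem_rebleWindow hk

/-- Reble's conjecture for OEIS A189377: `n` is of the form
`a(k) = k + ⌊ks/2⌋ + ⌊kt/2⌋` (with `s = (√5−1)/2`, `t = (1+√5)/2`) iff the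
Fibonacci word has a monochromatic 3-term arithmetic progression of `0`s with
common difference `n+1` but none of `1`s. -/
theorem reble_A189377
    (α : ℝ) (hα : α = (3 - Real.sqrt 5) / 2)
    (f : ℕ → ℤ) (hf : ∀ n : ℕ, f n = ⌊((n : ℝ) + 2) * α⌋ - ⌊((n : ℝ) + 1) * α⌋)
    (s t : ℝ) (hs : s = (Real.sqrt 5 - 1) / 2) (ht : t = (1 + Real.sqrt 5) / 2)
    (a : ℕ → ℤ) (ha : ∀ k : ℕ, a k = (k : ℤ) + ⌊(k : ℝ) * s / 2⌋ + ⌊(k : ℝ) * t / 2⌋) :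
    ∀ n : ℕ, 1 ≤ n →
      (((∃ i : ℕ, f i = 0 ∧ f (i + (n + 1)) = 0 ∧ f (i + 2 * (n + 1)) = 0) ∧
        ¬(∃ j : ℕ, f j = 1 ∧ f (j + (n + 1)) = 1 ∧ f (j + 2 * (n + 1)) = 1)) ↔
      (∃ k : ℕ, 1 ≤ k ∧ (n : ℤ) = a k)) := by
  intro n _
  subst hα hs ht
  obtain rfl : f = sturmian fibSlope := funext hf
  obtain rfl : a = a189377 := funext ha
  have h := irrational_fibSlope.sturmian_hasMonoAP_iff fibSlope_pos.le
    (fibSlope_lt_half.trans one_half_lt_one).le (d := n + 1) n.succ_pos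
  rw [Nat.cast_succ] at h
  exact h.trans (fract_mem_rebleWindow_iff n)
end

section
/- Let α = (3 − √5)/2, and define the Fibonacci word f : ℕ → ℤ by f(n) = ⌊(n+2)α⌋ − ⌊(n+1)α⌋. Let s = (√5 − 1)/2 and t = (1 + √5)/2, and define b(k) = k + ⌊2k/s⌋ + ⌊kt/s⌋ (equivalently b(k) = k + ⌊k(√5+1)⌋ + ⌊k(3+√5)/2⌋). Then for every integer n ≥ 1, the following are equivalent: (1) there is no i ≥ 0 with f(i) = f(i + (n+1)) = f(i + 2(n+1)) = 0 and there is no j ≥ 0 with f(j) = f(j + (n+1)) = f(j + 2(n+1)) = 1; (2) there exists an integer k ≥ 1 with n = b(k). -/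
/-!
Write `β = φ⁻¹ = s`, so that `α = 1 - β`. Then `f m = 0` iff `{(m + 1)α} < β`, and stepping `d`
along the word rotates the point `x = {(m + 1)α}` to `{x - θ}` with `θ = {dβ}`. A monochromatic
progression of difference `d` is thus a point of the orbit of `α` (dense, `α` being irrational)
such that `x, x - θ, x - 2θ` all lie in `[0, β)`, or all in `[β, 1)`, modulo 1. This is impossible
exactly when `θ` lies in `S = (β/2, 1 - β) ∪ (β, 1 - β/2)`, and otherwise happens in `[0, β)`
(irrationality keeps `θ` off the endpoints of `S`). Finally, with `u = {kβ}`, the number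
`d = b(k) + 1` has `θ = β⁴u + β` if `u < 1/2` and `θ = β⁴u + 2β - 1` if `u > 1/2`, and these two
affine maps carry `(0, 1/2)` and `(1/2, 1)` onto the two intervals of `S`.
-/
open Set Int
open scoped goldenRatio

section FloorRing

variable {R : Type*} [Ring R] [LinearOrder R] [FloorRing R] [IsOrderedRing R]

theorem floor_add_sub_floor_eq_floor_fract_add (y a : R) : ⌊y + a⌋ - ⌊y⌋ = ⌊fract y + a⌋ := by
  rw [← fract_add_floor y, add_right_comm, floor_add_intCast, fract_add_floor]
  ring

theorem floor_add_sub_floor_eq_zero_iff {a : R} (ha : 0 ≤ a) (y : R) :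
    ⌊y + a⌋ - ⌊y⌋ = 0 ↔ fract y < 1 - a := by
  rw [floor_add_sub_floor_eq_floor_fract_add, floor_eq_zero_iff, lt_sub_iff_add_lt]
  exact and_iff_right (add_nonneg (fract_nonneg y) ha)

theorem floor_add_sub_floor_eq_one_iff {a : R} (ha : a < 1) (y : R) :
    ⌊y + a⌋ - ⌊y⌋ = 1 ↔ 1 - a ≤ fract y := by
  rw [floor_add_sub_floor_eq_floor_fract_add, floor_eq_iff, sub_le_iff_le_add]
  push_cast
  exact ⟨And.left, fun h ↦ ⟨h, add_lt_add (fract_lt_one y) ha⟩⟩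

end FloorRing

theorem Irrational.exists_nat_fract_mul_mem_Ioo {ξ : ℝ} (hξ : Irrational ξ) {u v : ℝ}
    (hu : 0 ≤ u) (huv : u < v) (hv : v ≤ 1) : ∃ n : ℕ, fract (n * ξ) ∈ Ioo u v := by
  have hdense : DenseRange fun n : ℕ ↦ n • (ξ : AddCircle (1 : ℝ)) :=
    denseRange_zsmul_iff_nsmul.1 (AddCircle.denseRange_zsmul_coe_iff.2 (by simpa using hξ))
  obtain ⟨n, y, hy, hny⟩ := hdense.exists_mem_open
    (QuotientAddGroup.isOpenMap_coe _ isOpen_Ioo) ((nonempty_Ioo.2 huv).image _)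
  have hfract : fract (n * ξ) = y := by
    refine (AddCircle.coe_eq_coe_iff_of_mem_Ico (p := (1 : ℝ)) (a := 0) ?_ ?_).1 ?_
    · simpa using fract_lt_one _
    · constructor <;> linarith [hy.1, hy.2]
    · rw [AddCircle.coe_fract, hny, ← AddCircle.coe_nsmul, nsmul_eq_mul]
  exact ⟨n, hfract ▸ hy⟩

/-- The rotations `θ` for which `x, x - θ, x - 2θ` never fit modulo 1 into an interval of
length `L`. -/
def spreadAngles (L : ℝ) : Set ℝ := Ioo (L / 2) (1 - L) ∪ Ioo L (1 - L / 2)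

theorem not_abs_add_intCast_lt {L θ : ℝ} (hθ : θ ∈ spreadAngles L) (m n : ℤ) :
    ¬ (|θ + m| < L ∧ |θ + n| < L ∧ |2 * θ + m + n| < L) := by
  rintro ⟨hm, hn, hmn⟩
  rcases hθ with ⟨h1, h2⟩ | ⟨h1, h2⟩
  · have key : ∀ z : ℤ, |θ + z| < L → z = 0 := fun z hz ↦ by
      rw [abs_lt] at hz
      have : (-1 : ℤ) < z := by exact_mod_cast (by linarith : (-1 : ℝ) < z)
      have : z < 1 := by exact_mod_cast (by linarith : (z : ℝ) < 1)
      omega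
    rw [key m hm, key n hn, abs_lt] at hmn
    push_cast at hmn
    linarith
  · have key : ∀ z : ℤ, |θ + z| < L → z = -1 := fun z hz ↦ by
      rw [abs_lt] at hz
      have : (-2 : ℤ) < z := by exact_mod_cast (by linarith : (-2 : ℝ) < z)
      have : z < 0 := by exact_mod_cast (by linarith : (z : ℝ) < 0)
      omega
    rw [key m hm, key n hn, abs_lt] at hmn
    push_cast at hmn
    linarith

theorem not_fract_sub_mem_Ico {L θ : ℝ} (hθ : θ ∈ spreadAngles L) (x lo : ℝ) :
    ¬ (fract x ∈ Ico lo (lo + L) ∧ fract (x - θ) ∈ Ico lo (lo + L) ∧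
      fract (x - 2 * θ) ∈ Ico lo (lo + L)) := by
  rintro ⟨⟨h0, h0'⟩, ⟨h1, h1'⟩, ⟨h2, h2'⟩⟩
  refine not_abs_add_intCast_lt hθ (⌊x - θ⌋ - ⌊x⌋) (⌊x - 2 * θ⌋ - ⌊x - θ⌋) ?_
  rw [← self_sub_floor] at h0 h0' h1 h1' h2 h2'
  push_cast
  refine ⟨abs_lt.2 ⟨?_, ?_⟩, abs_lt.2 ⟨?_, ?_⟩, abs_lt.2 ⟨?_, ?_⟩⟩ <;> linarith

theorem exists_Ioo_forall_fract_sub_lt {L θ : ℝ} (hL : L ≤ 1) (hθ : θ ∈ Ico 0 1)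
    (hθL : θ ∉ Icc (L / 2) (1 - L) ∪ Icc L (1 - L / 2)) :
    ∃ u v, 0 ≤ u ∧ u < v ∧ v ≤ 1 ∧
      ∀ x ∈ Ioo u v, x < L ∧ fract (x - θ) < L ∧ fract (x - 2 * θ) < L := by
  obtain ⟨hθ0, hθ1⟩ := hθ
  have hfract {y : ℝ} (n : ℤ) (h0 : 0 ≤ y + n) (h1 : y + n < 1) : fract y = y + n := by
    rw [← fract_add_intCast y n, fract_eq_self.2 ⟨h0, h1⟩]
  simp only [mem_union, mem_Icc, not_or, not_and_or, not_le] at hθL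
  obtain ⟨hθL₁ | hθL₁, hθL₂ | hθL₂⟩ := hθL
  · refine ⟨2 * θ, L, by linarith, by linarith, hL, fun x ⟨hx, hx'⟩ ↦ ⟨hx', ?_, ?_⟩⟩
    · rw [hfract 0] <;> push_cast <;> linarith
    · rw [hfract 0] <;> push_cast <;> linarith
  · linarith
  · refine ⟨max (2 * θ - 1) 0, θ + L - 1, le_max_right _ _, max_lt (by linarith) (by linarith),
      by linarith, fun x ⟨hx, hx'⟩ ↦ ?_⟩
    obtain ⟨hx₁, hx₀⟩ := max_lt_iff.1 hx
    refine ⟨by linarith, ?_, ?_⟩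
    · rw [hfract 1] <;> push_cast <;> linarith
    · rw [hfract 1] <;> push_cast <;> linarith
  · refine ⟨0, L - 2 + 2 * θ, le_rfl, by linarith, by linarith,
      fun x ⟨hx, hx'⟩ ↦ ⟨by linarith, ?_, ?_⟩⟩
    · rw [hfract 1] <;> push_cast <;> linarith
    · rw [hfract 2] <;> push_cast <;> linarith

theorem Irrational.exists_fract_mul_sub_lt {α L θ : ℝ} (hα : Irrational α) (hL : L ≤ 1)
    (hθ : θ ∈ Ico 0 1) (hθL : θ ∉ Icc (L / 2) (1 - L) ∪ Icc L (1 - L / 2)) :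
    ∃ i : ℕ, fract ((i + 1) * α) < L ∧ fract ((i + 1) * α - θ) < L ∧
      fract ((i + 1) * α - 2 * θ) < L := by
  obtain ⟨u, v, hu, huv, hv, huvL⟩ := exists_Ioo_forall_fract_sub_lt hL hθ hθL
  obtain ⟨n, hn⟩ := hα.exists_nat_fract_mul_mem_Ioo hu huv hv
  obtain ⟨i, rfl⟩ : ∃ i, n = i + 1 := Nat.exists_eq_add_one.2 <| Nat.pos_of_ne_zero <| by
    rintro rfl
    simp only [CharP.cast_eq_zero, zero_mul, fract_zero] at hn
    exact hu.not_gt hn.1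
  have hsub (c : ℝ) : fract (fract ((i + 1) * α) - c) = fract ((i + 1) * α - c) :=
    fract_eq_fract.2 ⟨-⌊(i + 1) * α⌋, by rw [← self_sub_floor]; push_cast; ring⟩
  push_cast at hn
  exact ⟨i, by simpa only [hsub] using huvL _ hn⟩

noncomputable def sturmianWord (α : ℝ) (n : ℕ) : ℤ := ⌊((n : ℝ) + 2) * α⌋ - ⌊((n : ℝ) + 1) * α⌋

section SturmianWord

variable {β : ℝ}

theorem sturmianWord_one_sub_eq_zero_iff (hβ : β ≤ 1) (m : ℕ) :
    sturmianWord (1 - β) m = 0 ↔ fract ((m + 1) * (1 - β)) < β := by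
  rw [sturmianWord, show ((m : ℝ) + 2) * (1 - β) = (m + 1) * (1 - β) + (1 - β) by ring,
    floor_add_sub_floor_eq_zero_iff (by linarith), sub_sub_cancel]

theorem sturmianWord_one_sub_eq_one_iff (hβ : 0 < β) (m : ℕ) :
    sturmianWord (1 - β) m = 1 ↔ β ≤ fract ((m + 1) * (1 - β)) := by
  rw [sturmianWord, show ((m : ℝ) + 2) * (1 - β) = (m + 1) * (1 - β) + (1 - β) by ring,
    floor_add_sub_floor_eq_one_iff (by linarith), sub_sub_cancel]

theorem fract_add_mul_mul_one_sub (β : ℝ) (m j d : ℕ) :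
    fract ((((m + j * d : ℕ) : ℝ) + 1) * (1 - β)) =
      fract ((m + 1) * (1 - β) - j * fract (d * β)) := by
  refine fract_eq_fract.2 ⟨j * d - j * ⌊d * β⌋, ?_⟩
  rw [← self_sub_floor]
  push_cast
  ring

theorem fract_add_mul_one_sub (β : ℝ) (m d : ℕ) :
    fract ((((m + d : ℕ) : ℝ) + 1) * (1 - β)) = fract ((m + 1) * (1 - β) - fract (d * β)) := by
  simpa only [one_mul, Nat.cast_one] using fract_add_mul_mul_one_sub β m 1 d

theorem fract_add_two_mul_one_sub (β : ℝ) (m d : ℕ) :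
    fract ((((m + 2 * d : ℕ) : ℝ) + 1) * (1 - β)) =
      fract ((m + 1) * (1 - β) - 2 * fract (d * β)) := by
  simpa only [Nat.cast_ofNat] using fract_add_mul_mul_one_sub β m 2 d

theorem sturmianWord_one_sub_not_exists_ap (hβ₀ : 1 / 2 ≤ β) (hβ₁ : β ≤ 1) {d : ℕ}
    (hd : fract (d * β) ∈ spreadAngles β) :
    ¬ (∃ i, sturmianWord (1 - β) i = 0 ∧ sturmianWord (1 - β) (i + d) = 0 ∧
        sturmianWord (1 - β) (i + 2 * d) = 0) ∧
      ¬ (∃ j, sturmianWord (1 - β) j = 1 ∧ sturmianWord (1 - β) (j + d) = 1 ∧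
        sturmianWord (1 - β) (j + 2 * d) = 1) := by
  simp_rw [sturmianWord_one_sub_eq_zero_iff hβ₁, sturmianWord_one_sub_eq_one_iff (by linarith),
    fract_add_two_mul_one_sub, fract_add_mul_one_sub]
  have hlt (x : ℝ) : fract x < β + β := by linarith [fract_lt_one x]
  refine ⟨fun ⟨i, h₀, h₁, h₂⟩ ↦ not_fract_sub_mem_Ico hd ((i + 1) * (1 - β)) 0 ?_,
    fun ⟨j, h₀, h₁, h₂⟩ ↦ not_fract_sub_mem_Ico hd ((j + 1) * (1 - β)) β
      ⟨⟨h₀, hlt _⟩, ⟨h₁, hlt _⟩, ⟨h₂, hlt _⟩⟩⟩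
  rw [zero_add]
  exact ⟨⟨fract_nonneg _, h₀⟩, ⟨fract_nonneg _, h₁⟩, ⟨fract_nonneg _, h₂⟩⟩

theorem sturmianWord_one_sub_exists_ap_eq_zero (hβ : Irrational β) (hβ₁ : β ≤ 1) {d : ℕ}
    (hd : fract (d * β) ∉ Icc (β / 2) (1 - β) ∪ Icc β (1 - β / 2)) :
    ∃ i, sturmianWord (1 - β) i = 0 ∧ sturmianWord (1 - β) (i + d) = 0 ∧
      sturmianWord (1 - β) (i + 2 * d) = 0 := by
  simp_rw [sturmianWord_one_sub_eq_zero_iff hβ₁, fract_add_two_mul_one_sub, fract_add_mul_one_sub]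
  exact (by simpa using hβ.natCast_sub 1 : Irrational (1 - β)).exists_fract_mul_sub_lt hβ₁
    ⟨fract_nonneg _, fract_lt_one _⟩ hd

end SturmianWord

theorem goldenRatio_inv_eq : φ⁻¹ = (√5 - 1) / 2 := by
  rw [Real.inv_goldenRatio, Real.goldenConj]
  ring

theorem goldenRatio_inv_sq : φ⁻¹ ^ 2 = 1 - φ⁻¹ := by
  rw [goldenRatio_inv_eq]
  nlinarith [Real.sq_sqrt (show (0 : ℝ) ≤ 5 by norm_num)]

theorem one_half_lt_goldenRatio_inv : 1 / 2 < φ⁻¹ := by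
  rw [goldenRatio_inv_eq]
  nlinarith [Real.sq_sqrt (show (0 : ℝ) ≤ 5 by norm_num), Real.sqrt_nonneg 5]

theorem eq_zero_of_intCast_mul_goldenRatio_inv_eq {q p : ℤ} (h : q * φ⁻¹ = p) : q = 0 := by
  by_contra hq
  exact (Real.goldenRatio_irrational.inv.intCast_mul hq).ne_int p h

theorem goldenRatio_eq_one_add_inv : φ = 1 + φ⁻¹ := by
  rw [goldenRatio_inv_eq]
  ring

theorem goldenRatio_inv_pow_four : φ⁻¹ ^ 4 = 2 - 3 * φ⁻¹ := by
  linear_combination (φ⁻¹ ^ 2 + 2 - φ⁻¹) * goldenRatio_inv_sq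

/-- `!![5, 3; 3, 2]` is the fourth power of the Fibonacci matrix `!![1, 1; 1, 0]`. -/
theorem five_three_mul_goldenRatio_inv_sub (k p : ℝ) :
    (5 * k + 3 * p) * φ⁻¹ - (3 * k + 2 * p) = φ⁻¹ ^ 4 * (k * φ⁻¹ - p) := by
  linear_combination 3 * k * goldenRatio_inv_sq - (k * φ⁻¹ - p) * goldenRatio_inv_pow_four

theorem spreadAngles_subset_Ioo {L : ℝ} (hL : 0 < L) : spreadAngles L ⊆ Ioo 0 1 := by
  rintro θ (⟨h₁, h₂⟩ | ⟨h₁, h₂⟩) <;> constructor <;> linarith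

theorem mem_spreadAngles_goldenRatio_inv_iff {θ : ℝ} :
    θ ∈ spreadAngles φ⁻¹ ↔ ∃ e : ℤ, 0 ≤ e ∧ e ≤ 1 ∧
      ∃ u ∈ Ioo (e / 2 : ℝ) ((e + 1) / 2), θ = φ⁻¹ ^ 4 * u + (e + 1) * φ⁻¹ - e := by
  have h4 : 0 < φ⁻¹ ^ 4 := by positivity
  rw [goldenRatio_inv_pow_four] at h4 ⊢
  constructor
  · rintro (⟨h₁, h₂⟩ | ⟨h₁, h₂⟩)
    · refine ⟨1, zero_le_one, le_rfl, (θ - 2 * φ⁻¹ + 1) / (2 - 3 * φ⁻¹), ⟨?_, ?_⟩, ?_⟩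
      · rw [lt_div_iff₀ h4]; push_cast; linarith
      · rw [div_lt_iff₀ h4]; push_cast; linarith
      · rw [mul_div_cancel₀ _ h4.ne']; push_cast; ring
    · refine ⟨0, le_rfl, zero_le_one, (θ - φ⁻¹) / (2 - 3 * φ⁻¹), ⟨?_, ?_⟩, ?_⟩
      · rw [lt_div_iff₀ h4]; push_cast; linarith
      · rw [div_lt_iff₀ h4]; push_cast; linarith
      · rw [mul_div_cancel₀ _ h4.ne']; push_cast; ring
  · rintro ⟨e, he₀, he₁, u, ⟨hu₁, hu₂⟩, rfl⟩
    have := mul_lt_mul_of_pos_left hu₁ h4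
    have := mul_lt_mul_of_pos_left hu₂ h4
    interval_cases e
    · right; push_cast at *; constructor <;> linarith
    · left; push_cast at *; constructor <;> linarith

noncomputable def a189378 (k : ℕ) : ℤ := 5 * k + ⌊2 * k * φ⁻¹⌋ + ⌊k * φ⁻¹⌋

theorem a189378_eq (k : ℕ) :
    (k : ℤ) + ⌊2 * (k : ℝ) / φ⁻¹⌋ + ⌊(k : ℝ) * φ / φ⁻¹⌋ = a189378 k := by
  have h₁ : 2 * (k : ℝ) / φ⁻¹ = ((2 * k : ℤ) : ℝ) + 2 * k * φ⁻¹ := by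
    rw [div_inv_eq_mul]; push_cast
    linear_combination 2 * (k : ℝ) * goldenRatio_eq_one_add_inv
  have h₂ : (k : ℝ) * φ / φ⁻¹ = ((2 * k : ℤ) : ℝ) + k * φ⁻¹ := by
    rw [div_inv_eq_mul]; push_cast
    linear_combination (k : ℝ) * Real.goldenRatio_sq + (k : ℝ) * goldenRatio_eq_one_add_inv
  rw [h₁, h₂, floor_intCast_add, floor_intCast_add, a189378]
  ring

theorem a189378_eq_of_sub_mem_Ioo {k : ℕ} {p e : ℤ} (he₀ : 0 ≤ e) (he₁ : e ≤ 1)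
    (h : k * φ⁻¹ - p ∈ Ioo (e / 2 : ℝ) ((e + 1) / 2)) : a189378 k = 5 * k + 3 * p + e := by
  obtain ⟨h₁, h₂⟩ := h
  have he₀' : (0 : ℝ) ≤ e := by exact_mod_cast he₀
  have he₁' : (e : ℝ) ≤ 1 := by exact_mod_cast he₁
  have hp : ⌊k * φ⁻¹⌋ = p := floor_eq_iff.2 ⟨by linarith, by linarith⟩
  have h2p : ⌊2 * k * φ⁻¹⌋ = 2 * p + e :=
    floor_eq_iff.2 ⟨by push_cast; linarith, by push_cast; linarith⟩
  rw [a189378, hp, h2p]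
  ring

theorem fract_a189378_add_one_mul_mem_spreadAngles {k : ℕ} (hk : 1 ≤ k) :
    fract ((a189378 k + 1) * φ⁻¹) ∈ spreadAngles φ⁻¹ := by
  set p := ⌊k * φ⁻¹⌋
  have hu : k * φ⁻¹ - p = fract (k * φ⁻¹) := self_sub_floor _
  obtain ⟨e, he₀, he₁, he⟩ :
      ∃ e : ℤ, 0 ≤ e ∧ e ≤ 1 ∧ k * φ⁻¹ - p ∈ Ioo (e / 2 : ℝ) ((e + 1) / 2) := by
    have hu₀ : fract (k * φ⁻¹) ≠ 0 := fun h ↦ by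
      have := eq_zero_of_intCast_mul_goldenRatio_inv_eq (q := k) (p := p) (by push_cast; linarith)
      omega
    have hu₁ : fract (k * φ⁻¹) ≠ 1 / 2 := fun h ↦ by
      have := eq_zero_of_intCast_mul_goldenRatio_inv_eq (q := 2 * k) (p := 2 * p + 1)
        (by push_cast; linarith)
      omega
    have hu₀' := (fract_nonneg (k * φ⁻¹)).lt_of_ne' hu₀
    have hu₁' := fract_lt_one (k * φ⁻¹)
    rcases hu₁.lt_or_gt with h | h
    · exact ⟨0, le_rfl, zero_le_one, by rw [hu]; constructor <;> push_cast <;> linarith⟩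
    · exact ⟨1, zero_le_one, le_rfl, by rw [hu]; constructor <;> push_cast <;> linarith⟩
  have hθ := mem_spreadAngles_goldenRatio_inv_iff.2 ⟨e, he₀, he₁, _, he, rfl⟩
  obtain ⟨hθ₀, hθ₁⟩ := spreadAngles_subset_Ioo (by positivity) hθ
  convert hθ using 1
  refine fract_eq_iff.2 ⟨hθ₀.le, hθ₁, 3 * k + 2 * p + e, ?_⟩
  rw [a189378_eq_of_sub_mem_Ioo he₀ he₁ he]
  push_cast
  linear_combination five_three_mul_goldenRatio_inv_sub k p

theorem exists_a189378_of_fract_mul_mem_spreadAngles {d : ℕ}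
    (hd : fract (d * φ⁻¹) ∈ spreadAngles φ⁻¹) : ∃ k : ℕ, 1 ≤ k ∧ (d : ℤ) = a189378 k + 1 := by
  obtain ⟨e, he₀, he₁, u, hu, hθ⟩ := mem_spreadAngles_goldenRatio_inv_iff.1 hd
  -- invert the substitution `(k, p) ↦ (5k + 3p, 3k + 2p)`
  obtain ⟨k, p, hD, hM⟩ : ∃ k p : ℤ, 5 * k + 3 * p = d - 1 - e ∧ 3 * k + 2 * p = ⌊d * φ⁻¹⌋ - e :=
    ⟨2 * (d - 1 - e) - 3 * (⌊d * φ⁻¹⌋ - e), 5 * (⌊d * φ⁻¹⌋ - e) - 3 * (d - 1 - e), by ring, by ring⟩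
  have hkp : k * φ⁻¹ - p = u := by
    have hD' : (5 * k + 3 * p : ℝ) = d - 1 - e := by exact_mod_cast hD
    have hM' : (3 * k + 2 * p : ℝ) = ⌊d * φ⁻¹⌋ - e := by exact_mod_cast hM
    refine mul_left_cancel₀ (by positivity : φ⁻¹ ^ 4 ≠ 0) ?_
    rw [← five_three_mul_goldenRatio_inv_sub, hD', hM']
    linear_combination (self_sub_floor (d * φ⁻¹)).trans hθ
  have hk : 1 ≤ k := by
    by_contra! hk
    have : (k : ℝ) * φ⁻¹ ≤ 0 :=
      mul_nonpos_of_nonpos_of_nonneg (by exact_mod_cast (by omega : k ≤ 0)) (by positivity)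
    have : p < 0 := by
      have : (0 : ℝ) ≤ e := by exact_mod_cast he₀
      exact_mod_cast (by linarith [hu.1] : (p : ℝ) < 0)
    omega
  lift k to ℕ using by omega
  exact ⟨k, by omega, by rw [a189378_eq_of_sub_mem_Ioo he₀ he₁ (hkp ▸ hu)]; omega⟩

theorem fract_mul_goldenRatio_inv_mem_spreadAngles_iff (d : ℕ) :
    fract (d * φ⁻¹) ∈ spreadAngles φ⁻¹ ↔ ∃ k : ℕ, 1 ≤ k ∧ (d : ℤ) = a189378 k + 1 := by
  refine ⟨exists_a189378_of_fract_mul_mem_spreadAngles, fun ⟨k, hk, hd⟩ ↦ ?_⟩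
  rw [show (d : ℝ) = ((a189378 k + 1 : ℤ) : ℝ) by exact_mod_cast hd]
  push_cast
  exact fract_a189378_add_one_mul_mem_spreadAngles hk

theorem fract_mul_goldenRatio_inv_mem_spreadAngles {d : ℕ} (hd : 2 ≤ d)
    (h : fract (d * φ⁻¹) ∈ Icc (φ⁻¹ / 2) (1 - φ⁻¹) ∪ Icc φ⁻¹ (1 - φ⁻¹ / 2)) :
    fract (d * φ⁻¹) ∈ spreadAngles φ⁻¹ := by
  have key (q p : ℤ) (hq : q ≠ 0) : (q : ℝ) * φ⁻¹ ≠ p :=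
    fun h ↦ hq (eq_zero_of_intCast_mul_goldenRatio_inv_eq h)
  rw [← self_sub_floor] at h ⊢
  rcases h with ⟨h₁, h₂⟩ | ⟨h₁, h₂⟩
  · refine .inl ⟨h₁.lt_of_ne fun h ↦ ?_, h₂.lt_of_ne fun h ↦ ?_⟩
    · exact key (2 * d - 1) (2 * ⌊d * φ⁻¹⌋) (by omega) (by push_cast; linarith)
    · exact key (d + 1) (⌊d * φ⁻¹⌋ + 1) (by omega) (by push_cast; linarith)
  · refine .inr ⟨h₁.lt_of_ne fun h ↦ ?_, h₂.lt_of_ne fun h ↦ ?_⟩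
    · exact key (d - 1) ⌊d * φ⁻¹⌋ (by omega) (by push_cast; linarith)
    · exact key (2 * d + 1) (2 * ⌊d * φ⁻¹⌋ + 2) (by omega) (by push_cast; linarith)

/-- Reble's conjecture for OEIS A189378: `n` is of the form
`b(k) = k + ⌊2k/s⌋ + ⌊kt/s⌋` (with `s = (√5−1)/2`, `t = (1+√5)/2`) iff the
Fibonacci word has no monochromatic 3-term arithmetic progression (of `0`s or of
`1`s) with common difference `n+1`. -/
theorem reble_A189378
    (α : ℝ) (hα : α = (3 - Real.sqrt 5) / 2)
    (f : ℕ → ℤ) (hf : ∀ n : ℕ, f n = ⌊((n : ℝ) + 2) * α⌋ - ⌊((n : ℝ) + 1) * α⌋)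
    (s t : ℝ) (hs : s = (Real.sqrt 5 - 1) / 2) (ht : t = (1 + Real.sqrt 5) / 2)
    (b : ℕ → ℤ) (hb : ∀ k : ℕ, b k = (k : ℤ) + ⌊2 * (k : ℝ) / s⌋ + ⌊(k : ℝ) * t / s⌋) :
    ∀ n : ℕ, 1 ≤ n →
      ((¬(∃ i : ℕ, f i = 0 ∧ f (i + (n + 1)) = 0 ∧ f (i + 2 * (n + 1)) = 0) ∧
        ¬(∃ j : ℕ, f j = 1 ∧ f (j + (n + 1)) = 1 ∧ f (j + 2 * (n + 1)) = 1)) ↔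
      (∃ k : ℕ, 1 ≤ k ∧ (n : ℤ) = b k)) := by
  obtain rfl : α = 1 - φ⁻¹ := by rw [hα, goldenRatio_inv_eq]; ring
  obtain rfl : f = sturmianWord (1 - φ⁻¹) := funext hf
  have hβ₀ := one_half_lt_goldenRatio_inv
  have hβ₁ : φ⁻¹ < 1 := inv_lt_one_of_one_lt₀ Real.one_lt_goldenRatio
  intro n hn
  have hb' : (∃ k, 1 ≤ k ∧ (n : ℤ) = b k) ↔ fract (((n + 1 : ℕ) : ℝ) * φ⁻¹) ∈ spreadAngles φ⁻¹ := by
    rw [fract_mul_goldenRatio_inv_mem_spreadAngles_iff]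
    simp only [hb, hs, ht, ← goldenRatio_inv_eq, a189378_eq]
    push_cast
    constructor <;> rintro ⟨k, hk, h⟩ <;> exact ⟨k, hk, by omega⟩
  rw [hb']
  refine ⟨fun ⟨hno₀, _⟩ ↦ by_contra fun hθ ↦ hno₀ ?_,
    sturmianWord_one_sub_not_exists_ap hβ₀.le (by linarith)⟩
  exact sturmianWord_one_sub_exists_ap_eq_zero Real.goldenRatio_irrational.inv (by linarith)
    (mt (fract_mul_goldenRatio_inv_mem_spreadAngles (by omega)) hθ)
end

section
/- Let α = (3 − √5)/2, and define the Fibonacci word f : ℕ → ℤ by f(n) = ⌊(n+2)α⌋ − ⌊(n+1)α⌋. Let s = (√5 − 1)/2 and t = (1 + √5)/2, and define c(k) = k + ⌊2k/t⌋ + ⌊ks/t⌋ (equivalently c(k) = k + ⌊k(√5−1)⌋ + ⌊k(3−√5)/2⌋). Then for every integer n ≥ 1, the following are equivalent: (1) there exists i ≥ 0 with f(i) = f(i + (n+1)) = f(i + 2(n+1)) = 0 and there exists j ≥ 0 with f(j) = f(j + (n+1)) = f(j + 2(n+1)) = 1; (2) there exists an integer k ≥ 1 with n = c(k). -/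
/-!
Writing `θ = 2 - φ = φ⁻²`, the Fibonacci word is `f i = ⌊x + θ⌋ - ⌊x⌋` with `x = (i + 1) θ`, so
`f i = 1` exactly when `fract ((i + 1) θ)` lies in the arc `[1 - θ, 1)` of length `θ`, and `f i = 0`
when it lies in the complementary arc. A 3-term progression of difference `d` in the word is a
progression `y, y + dθ, y + 2dθ` (mod 1) in the orbit of the irrational rotation by `θ`. Three such
points fit in an arc of length `w ≤ 1/2` only if `‖dθ‖ < w / 2`; conversely, if `‖dθ‖ < w / 2` the
orbit, being dense, visits the open set of starting points that work. For both letters this gives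
the single condition `‖dθ‖ < θ / 2`. With `d = n + 1` and `θ φ² = 1` it reads
`|n + 1 - k φ²| < 1 / 2` for an integer `k`, i.e. `n + 1 = round (k φ²)`, and
`c k = k + ⌊2kφ⌋ - ⌈kφ⌉ = round (k φ²) - 1`.
-/

open Set Int
open scoped goldenRatio
open Real

section FloorRing

variable {R : Type*} [Field R] [LinearOrder R] [IsStrictOrderedRing R] [FloorRing R]

theorem floor_add_sub_floor (x θ : R) : ⌊x + θ⌋ - ⌊x⌋ = ⌊fract x + θ⌋ := by
  rw [show x + θ = fract x + θ + ⌊x⌋ by linarith [fract_add_floor x], floor_add_intCast]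
  ring

theorem floor_add_sub_floor_eq_one_iff_s7 {x θ : R} (hθ : θ ≤ 1) :
    ⌊x + θ⌋ - ⌊x⌋ = 1 ↔ fract x ∈ Ico (1 - θ) 1 := by
  rw [floor_add_sub_floor, floor_eq_iff, mem_Ico, cast_one]
  have := fract_lt_one x
  constructor <;> rintro ⟨_, _⟩ <;> constructor <;> linarith

theorem floor_add_sub_floor_eq_zero_iff_s7 {x θ : R} (hθ : 0 ≤ θ) :
    ⌊x + θ⌋ - ⌊x⌋ = 0 ↔ fract x ∈ Ico 0 (1 - θ) := by
  rw [floor_add_sub_floor, floor_eq_iff, mem_Ico, cast_zero]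
  have := fract_nonneg x
  constructor <;> rintro ⟨_, _⟩ <;> constructor <;> linarith

theorem round_eq_floor_two_mul_sub_floor (x : R) : round x = ⌊2 * x⌋ - ⌊x⌋ := by
  have h₁ := floor_le x
  have h₂ := lt_floor_add_one x
  have h₃ := floor_le (2 * x)
  have h₄ := lt_floor_add_one (2 * x)
  have hlo : 2 * ⌊x⌋ ≤ ⌊2 * x⌋ := by rw [le_floor]; push_cast; linarith
  have hhi : ⌊2 * x⌋ < 2 * ⌊x⌋ + 2 := by rw [floor_lt]; push_cast; linarith
  rw [round_eq_iff, mem_Ico]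
  push_cast
  rcases (by omega : ⌊2 * x⌋ = 2 * ⌊x⌋ ∨ ⌊2 * x⌋ = 2 * ⌊x⌋ + 1) with h | h <;>
  · have hcast : (⌊2 * x⌋ : R) = ((_ : ℤ) : R) := congrArg _ h
    push_cast at hcast
    constructor <;> linarith

theorem exists_int_abs_sub_lt_of_fract_mem_Ico {a b x β : R} (hab : b - a ≤ 1 / 2)
    (h₀ : fract x ∈ Ico a b) (h₁ : fract (x + β) ∈ Ico a b) (h₂ : fract (x + 2 * β) ∈ Ico a b) :
    ∃ k : ℤ, |β - k| < (b - a) / 2 := by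
  obtain ⟨h₀, h₀'⟩ := h₀
  obtain ⟨h₁, h₁'⟩ := h₁
  obtain ⟨h₂, h₂'⟩ := h₂
  have e₀ := fract_add_floor x
  have e₁ := fract_add_floor (x + β)
  have e₂ := fract_add_floor (x + 2 * β)
  -- both steps are `β` modulo `1` and shorter than `b - a ≤ 1 / 2`, hence they are equal
  have hstep : ⌊x + 2 * β⌋ = 2 * ⌊x + β⌋ - ⌊x⌋ := by
    have : |((⌊x + 2 * β⌋ - 2 * ⌊x + β⌋ + ⌊x⌋ : ℤ) : R)| < 1 := by
      rw [abs_lt]; push_cast; constructor <;> linarith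
    have := abs_lt.1 (show |⌊x + 2 * β⌋ - 2 * ⌊x + β⌋ + ⌊x⌋| < 1 by exact_mod_cast this)
    omega
  have hstep' : (⌊x + 2 * β⌋ : R) = 2 * ⌊x + β⌋ - ⌊x⌋ := by exact_mod_cast hstep
  refine ⟨⌊x + β⌋ - ⌊x⌋, abs_lt.2 ⟨?_, ?_⟩⟩ <;> push_cast <;> linarith

end FloorRing

theorem round_eq_iff_abs_sub_lt {x : ℝ} (hx : Irrational x) {m : ℤ} :
    round x = m ↔ |x - m| < 1 / 2 := by
  have hne : (m - 1 / 2 : ℝ) ≠ x := by simpa using (hx.ne_rat (m - 1 / 2)).symm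
  rw [round_eq_iff, abs_sub_lt_iff, mem_Ico, le_iff_lt_or_eq, or_iff_left hne]
  constructor <;> rintro ⟨_, _⟩ <;> constructor <;> linarith

theorem exists_nat_fract_mul_mem_Ioo {θ p q : ℝ} (hθ : Irrational θ) (hp : 0 ≤ p) (hpq : p < q)
    (hq : q ≤ 1) : ∃ m : ℕ, fract (m * θ) ∈ Ioo p q := by
  have hdense : DenseRange fun m : ℕ ↦ m • (θ : AddCircle (1 : ℝ)) :=
    denseRange_zsmul_iff_nsmul.1 (AddCircle.denseRange_zsmul_coe_iff.2 (by simpa using hθ))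
  obtain ⟨m, y, hy, hym⟩ := hdense.exists_mem_open
    (QuotientAddGroup.isOpenMap_coe _ isOpen_Ioo) ((nonempty_Ioo.2 hpq).image _)
  rw [← AddCircle.coe_nsmul, nsmul_eq_mul, QuotientAddGroup.eq,
    AddSubgroup.mem_zmultiples_iff] at hym
  obtain ⟨z, hz⟩ := hym
  rw [zsmul_one] at hz
  refine ⟨m, ?_⟩
  rwa [show (m : ℝ) * θ = y + z by linarith, fract_add_intCast,
    fract_eq_self.2 ⟨hp.trans hy.1.le, hy.2.trans_le hq⟩]

theorem exists_fract_mem_Ico_of_abs_sub_lt {θ a b β : ℝ} {k : ℤ} (hθ : Irrational θ)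
    (ha : 0 ≤ a) (hb : b ≤ 1) (hk : |β - k| < (b - a) / 2) :
    ∃ i : ℕ, fract ((i + 1) * θ) ∈ Ico a b ∧ fract ((i + 1) * θ + β) ∈ Ico a b ∧
      fract ((i + 1) * θ + 2 * β) ∈ Ico a b := by
  set d := β - k
  have hd := abs_lt.1 hk
  have hd₁ := le_abs_self d
  have hd₂ := neg_abs_le d
  -- for `y` in this interval, `y`, `y + d` and `y + 2 * d` all lie in `(a, b)`
  obtain ⟨m, hm⟩ := exists_nat_fract_mul_mem_Ioo (p := a + |d| - d) (q := b - |d| - d) hθ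
    (by linarith) (by linarith) (by linarith)
  obtain ⟨i, rfl⟩ : ∃ i, m = i + 1 := Nat.exists_eq_succ_of_ne_zero <| by
    rintro rfl
    simp only [CharP.cast_eq_zero, zero_mul, fract_zero, mem_Ioo] at hm
    linarith
  set y := fract (((i + 1 : ℕ) : ℝ) * θ)
  have hmem (j : ℕ) (hj : j ≤ 2) : fract ((i + 1) * θ + j * β) ∈ Ico a b := by
    have hshift : fract ((i + 1) * θ + j * β) = fract (y + j * d) := by
      rw [fract_eq_fract]
      exact ⟨⌊((i + 1 : ℕ) : ℝ) * θ⌋ + j * k, by unfold y d fract; push_cast; ring⟩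
    have hyd : y + j * d ∈ Ioo a b := by
      interval_cases j <;> constructor <;> push_cast <;> linarith [hm.1, hm.2]
    rw [hshift, fract_eq_self.2 ⟨by linarith [hyd.1], by linarith [hyd.2]⟩]
    exact Ioo_subset_Ico_self hyd
  exact ⟨i, by simpa using hmem 0, by simpa using hmem 1, by simpa using hmem 2⟩

/-- The characteristic Sturmian word of slope `θ`, shifted so that it starts at index `0`. -/
noncomputable def characteristicWord (θ : ℝ) (i : ℕ) : ℤ :=
  ⌊((i : ℝ) + 2) * θ⌋ - ⌊((i : ℝ) + 1) * θ⌋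

section CharacteristicWord

variable {θ : ℝ}

theorem characteristicWord_eq_one_iff (hθ : θ ≤ 1) (i : ℕ) :
    characteristicWord θ i = 1 ↔ fract ((i + 1) * θ) ∈ Ico (1 - θ) 1 := by
  rw [characteristicWord, show ((i : ℝ) + 2) * θ = (i + 1) * θ + θ by ring]
  exact floor_add_sub_floor_eq_one_iff_s7 hθ

theorem characteristicWord_eq_zero_iff (hθ : 0 ≤ θ) (i : ℕ) :
    characteristicWord θ i = 0 ↔ fract ((i + 1) * θ) ∈ Ico 0 (1 - θ) := by
  rw [characteristicWord, show ((i : ℝ) + 2) * θ = (i + 1) * θ + θ by ring]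
  exact floor_add_sub_floor_eq_zero_iff_s7 hθ

theorem exists_ap_iff_of_forall_eq_iff_fract_mem {w : ℕ → ℤ} {c : ℤ} {I : Set ℝ}
    (hw : ∀ i, w i = c ↔ fract ((i + 1) * θ) ∈ I) (d : ℕ) :
    (∃ i, w i = c ∧ w (i + d) = c ∧ w (i + 2 * d) = c) ↔
      ∃ i : ℕ, fract ((i + 1) * θ) ∈ I ∧ fract ((i + 1) * θ + d * θ) ∈ I ∧
        fract ((i + 1) * θ + 2 * (d * θ)) ∈ I := by
  have hshift (i m : ℕ) : (((i + m : ℕ) : ℝ) + 1) * θ = (i + 1) * θ + m * θ := by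
    push_cast; ring
  simp only [hw, hshift, Nat.cast_mul, Nat.cast_ofNat, mul_assoc]

theorem characteristicWord_ap_iff (hθ : Irrational θ) (h₀ : 0 ≤ θ) (h₁ : θ ≤ 1 / 2) (d : ℕ) :
    ((∃ i, characteristicWord θ i = 0 ∧ characteristicWord θ (i + d) = 0 ∧
        characteristicWord θ (i + 2 * d) = 0) ∧
      (∃ j, characteristicWord θ j = 1 ∧ characteristicWord θ (j + d) = 1 ∧
        characteristicWord θ (j + 2 * d) = 1)) ↔
      ∃ k : ℤ, |d * θ - k| < θ / 2 := by
  rw [exists_ap_iff_of_forall_eq_iff_fract_mem (characteristicWord_eq_zero_iff h₀),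
    exists_ap_iff_of_forall_eq_iff_fract_mem (characteristicWord_eq_one_iff (by linarith))]
  constructor
  · rintro ⟨-, j, hj₀, hj₁, hj₂⟩
    simpa using exists_int_abs_sub_lt_of_fract_mem_Ico (by linarith) hj₀ hj₁ hj₂
  · rintro ⟨k, hk⟩
    exact ⟨exists_fract_mem_Ico_of_abs_sub_lt (k := k) hθ le_rfl (by linarith) (by linarith),
      exists_fract_mem_Ico_of_abs_sub_lt hθ (by linarith) le_rfl (by simpa using hk)⟩

end CharacteristicWord

theorem natCast_add_floor_two_mul_div_goldenRatio_add_floor {k : ℕ} (hk : k ≠ 0) :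
    (k : ℤ) + ⌊2 * k / φ⌋ + ⌊k * φ⁻¹ / φ⌋ = round (k * φ ^ 2) - 1 := by
  have h₁ : 2 * k / φ = 2 * (k * φ) + ((-2 * k : ℤ) : ℝ) := by
    rw [div_eq_iff goldenRatio_ne_zero]; push_cast
    linear_combination (-2 * k : ℝ) * goldenRatio_sq
  have h₂ : k * φ⁻¹ / φ = -(k * φ) + ((2 * k : ℤ) : ℝ) := by
    rw [div_eq_iff goldenRatio_ne_zero, inv_goldenRatio]; push_cast
    linear_combination (k : ℝ) * goldenRatio_sq
  have hceil : ⌈(k * φ : ℝ)⌉ = ⌊(k * φ : ℝ)⌋ + 1 :=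
    (ceil_eq_floor_add_one_iff_notMem _).2 fun ⟨m, hm⟩ ↦
      (goldenRatio_irrational.natCast_mul hk).ne_int m hm.symm
  rw [h₁, h₂, floor_add_intCast, floor_add_intCast, floor_neg, hceil,
    show (k * φ ^ 2 : ℝ) = k * φ + k by linear_combination (k : ℝ) * goldenRatio_sq,
    round_add_natCast, round_eq_floor_two_mul_sub_floor]
  ring

theorem exists_eq_natCast_add_floor_two_mul_div_goldenRatio_add_floor_iff (n : ℕ) :
    (∃ k : ℕ, 1 ≤ k ∧ (n : ℤ) = k + ⌊2 * k / φ⌋ + ⌊k * φ⁻¹ / φ⌋) ↔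
      ∃ k : ℤ, |(n + 1) * (2 - φ) - k| < (2 - φ) / 2 := by
  have hα : 0 < 2 - φ := sub_pos.2 goldenRatio_lt_two
  have hscale (k : ℝ) :
      |(n + 1) * (2 - φ) - k| < (2 - φ) / 2 ↔ |k * φ ^ 2 - (n + 1 : ℤ)| < 1 / 2 := by
    rw [show (n + 1) * (2 - φ) - k = (2 - φ) * ((n + 1 : ℤ) - k * φ ^ 2) by
      push_cast; linear_combination (k * (1 - φ)) * goldenRatio_sq, abs_mul, abs_of_pos hα,
      abs_sub_comm]
    constructor <;> intro h <;> nlinarith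
  have hround {k : ℕ} (hk : k ≠ 0) :
      (n : ℤ) = k + ⌊2 * k / φ⌋ + ⌊k * φ⁻¹ / φ⌋ ↔ |k * φ ^ 2 - (n + 1 : ℤ)| < 1 / 2 := by
    have hirr : Irrational (k * φ ^ 2) := by
      rw [goldenRatio_sq, mul_add, mul_one]
      exact (goldenRatio_irrational.natCast_mul hk).add_natCast k
    rw [← round_eq_iff_abs_sub_lt hirr, natCast_add_floor_two_mul_div_goldenRatio_add_floor hk]
    omega
  constructor
  · rintro ⟨k, hk, hn⟩
    exact ⟨k, (hscale k).2 (by exact_mod_cast (hround (by omega)).1 hn)⟩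
  · rintro ⟨k, hk⟩
    have hk₀ : 0 < k := by
      have hlt := (abs_lt.1 hk).2
      exact_mod_cast (show (0 : ℝ) < k by nlinarith)
    lift k to ℕ using hk₀.le
    exact ⟨k, by omega, (hround (by omega)).2 (by exact_mod_cast (hscale k).1 hk)⟩

/-- Reble's conjecture for OEIS A189379: `n` is of the form
`c(k) = k + ⌊2k/t⌋ + ⌊ks/t⌋` (with `s = (√5−1)/2`, `t = (1+√5)/2`) iff the
Fibonacci word has a monochromatic 3-term arithmetic progression of `0`s and
also one of `1`s, both with common difference `n+1`. -/
theorem reble_A189379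
    (α : ℝ) (hα : α = (3 - Real.sqrt 5) / 2)
    (f : ℕ → ℤ) (hf : ∀ n : ℕ, f n = ⌊((n : ℝ) + 2) * α⌋ - ⌊((n : ℝ) + 1) * α⌋)
    (s t : ℝ) (hs : s = (Real.sqrt 5 - 1) / 2) (ht : t = (1 + Real.sqrt 5) / 2)
    (c : ℕ → ℤ) (hc : ∀ k : ℕ, c k = (k : ℤ) + ⌊2 * (k : ℝ) / t⌋ + ⌊(k : ℝ) * s / t⌋) :
    ∀ n : ℕ, 1 ≤ n →
      (((∃ i : ℕ, f i = 0 ∧ f (i + (n + 1)) = 0 ∧ f (i + 2 * (n + 1)) = 0) ∧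
        (∃ j : ℕ, f j = 1 ∧ f (j + (n + 1)) = 1 ∧ f (j + 2 * (n + 1)) = 1)) ↔
      (∃ k : ℕ, 1 ≤ k ∧ (n : ℤ) = c k)) := by
  intro n _
  obtain rfl : t = φ := ht
  obtain rfl : s = φ⁻¹ := by rw [hs, inv_goldenRatio]; ring
  obtain rfl : α = 2 - φ := by rw [hα]; ring
  obtain rfl : f = characteristicWord (2 - φ) := funext hf
  have hirr : Irrational (2 - φ) := by simpa using goldenRatio_irrational.natCast_sub 2
  have hφ : 3 / 2 < φ := by
    have : 2 < √5 := by rw [Real.lt_sqrt] <;> norm_num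
    unfold goldenRatio; linarith
  simp only [hc]
  rw [characteristicWord_ap_iff hirr (by linarith [goldenRatio_lt_two]) (by linarith),
    exists_eq_natCast_add_floor_two_mul_div_goldenRatio_add_floor_iff]
  push_cast
  rfl
end

section
/- Let φ = (1 + √5)/2 be the golden ratio. Define a(n) = ⌊nφ⁴⌋, b(n) = ⌊nφ³⌋, c(n) = ⌊nφ⌋, and for n ≥ 1 let c̃(n) be the n-th smallest positive integer not contained in the union {a(i) : i ≥ 1} ∪ {b(i) : i ≥ 1}. Then for all n ≥ 1, 0 ≤ c(n) − c̃(n) ≤ 2. -/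
/-!
Counting argument. For `α ≥ 1` the values `⌊iα⌋`, `i ≥ 1`, lying in `[1, M]` number
`A(M)` with `A(M) < (M + 1)/α ≤ A(M) + 1`. Since `2/φ⁴ + 3/φ³ = 1` and `φ⁴` is irrational,
the two Beatty sets for `φ⁴` and `φ³` are disjoint, so `S` has `M - A(M) - B(M)` elements in
`[1, M]`. As `1/φ⁴ + 1/φ³ + 1/φ = 1`, for `N = ⌊nφ⌋` this count is at least `n` at `M = N`, and
less than `n` at `M = N - 3` because `2/φ > 1`.
-/

open Real

def IsBeattyValue (α : ℝ) (x : ℕ) : Prop := ∃ i : ℕ, 1 ≤ i ∧ (x : ℤ) = ⌊(i : ℝ) * α⌋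

def beattyComplement (α β : ℝ) : Set ℕ :=
  {x | 0 < x ∧ ¬IsBeattyValue α x ∧ ¬IsBeattyValue β x}

section Beatty

variable {α : ℝ}

lemma not_isBeattyValue_zero (hα : 1 ≤ α) : ¬IsBeattyValue α 0 := by
  rintro ⟨i, hi, h⟩
  have : (1 : ℝ) ≤ i := by exact_mod_cast hi
  have : (1 : ℤ) ≤ ⌊(i : ℝ) * α⌋ := Int.le_floor.2 (by push_cast; nlinarith)
  omega

lemma isBeattyValue_iff_natFloor (hα : 0 ≤ α) {x : ℕ} :
    IsBeattyValue α x ↔ ∃ i : ℕ, 1 ≤ i ∧ ⌊(i : ℝ) * α⌋₊ = x := by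
  refine exists_congr fun i => and_congr_right fun _ => ?_
  rw [← Int.natCast_floor_eq_floor (by positivity), eq_comm]
  exact Int.natCast_inj

lemma strictMono_natFloor_mul (hα : 1 ≤ α) : StrictMono fun i : ℕ => ⌊i * α⌋₊ := by
  intro i j hij
  have : (i : ℝ) * α + 1 ≤ j * α := by
    have : (i : ℝ) + 1 ≤ j := by exact_mod_cast hij
    nlinarith
  calc ⌊i * α⌋₊ < ⌊i * α⌋₊ + 1 := lt_add_one _
  _ = ⌊i * α + 1⌋₊ := (Nat.floor_add_one (by positivity)).symm
  _ ≤ ⌊j * α⌋₊ := Nat.floor_le_floor this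

open Classical in
lemma count_isBeattyValue (hα : 1 ≤ α) {M k : ℕ} (hk : k * α < M + 1)
    (hk' : M + 1 ≤ (k + 1) * α) : Nat.count (IsBeattyValue α) (M + 1) = k := by
  have hα0 : 0 < α := by linarith
  have hvalues : {x ∈ Finset.range (M + 1) | IsBeattyValue α x} =
      (Finset.Icc 1 k).image fun i : ℕ => ⌊i * α⌋₊ := by
    ext x
    simp only [Finset.mem_filter, Finset.mem_range, Finset.mem_image, Finset.mem_Icc,
      isBeattyValue_iff_natFloor hα0.le]
    constructor
    · rintro ⟨hxM, i, hi, rfl⟩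
      refine ⟨i, ⟨hi, ?_⟩, rfl⟩
      have : (i : ℝ) * α < (k + 1) * α := by
        have := Nat.lt_floor_add_one ((i : ℝ) * α)
        have : (⌊(i : ℝ) * α⌋₊ : ℝ) + 1 ≤ M + 1 := by exact_mod_cast hxM
        linarith
      have : (i : ℝ) < k + 1 := lt_of_mul_lt_mul_right this hα0.le
      exact Nat.lt_add_one_iff.1 (by exact_mod_cast this)
    · rintro ⟨i, ⟨hi, hik⟩, rfl⟩
      refine ⟨(Nat.floor_lt (by positivity)).2 ?_, i, hi, rfl⟩
      have : (i : ℝ) ≤ k := by exact_mod_cast hik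
      push_cast
      nlinarith
  rw [Nat.count_eq_card_filter_range, hvalues,
    Finset.card_image_of_injective _ (strictMono_natFloor_mul hα).injective, Nat.card_Icc,
    Nat.add_sub_cancel]

open Classical in
lemma div_mem_Ioc_count_isBeattyValue (hα : 1 ≤ α) (M : ℕ) :
    (M + 1) / α ∈ Set.Ioc (Nat.count (IsBeattyValue α) (M + 1) : ℝ)
      (Nat.count (IsBeattyValue α) (M + 1) + 1) := by
  have hα0 : 0 < α := by linarith
  set y : ℝ := (M + 1) / α
  have hy : 0 < y := by positivity
  have hceil : 1 ≤ ⌈y⌉₊ := Nat.one_le_iff_ne_zero.2 (Nat.ceil_pos.2 hy).ne'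
  have hk : ((⌈y⌉₊ - 1 : ℕ) : ℝ) + 1 = ⌈y⌉₊ := by
    rw [Nat.cast_sub hceil]; ring
  rw [count_isBeattyValue hα (k := ⌈y⌉₊ - 1)]
  · exact ⟨by linarith [Nat.ceil_lt_add_one hy.le], hk ▸ Nat.le_ceil y⟩
  · rw [← lt_div_iff₀ hα0]; linarith [Nat.ceil_lt_add_one hy.le]
  · rw [← div_le_iff₀ hα0, hk]; exact Nat.le_ceil y

end Beatty

lemma floor_mul_ne_floor_mul {α β : ℝ} (hα : Irrational α) (hα0 : 0 < α) (hβ0 : 0 < β)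
    {p q : ℕ} (hp : 0 < p) (hpq : p / α + q / β = 1) {i : ℕ} (hi : i ≠ 0) (j : ℕ) :
    ⌊i * α⌋ ≠ ⌊j * β⌋ := by
  intro h
  set m := ⌊j * β⌋
  -- `p * i + q * j` would be an integer strictly between `m` and `m + 1`
  have hiα : (m : ℝ) < i * α :=
    h ▸ (Int.floor_le _).lt_of_ne ((hα.natCast_mul hi).ne_int _).symm
  have hi_lo : m / α < i := (div_lt_iff₀ hα0).2 hiα
  have hj_lo : m / β ≤ j := (div_le_iff₀ hβ0).2 (Int.floor_le _)
  have hi_hi : (i : ℝ) < (m + 1) / α := (lt_div_iff₀ hα0).2 (h ▸ Int.lt_floor_add_one _)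
  have hj_hi : (j : ℝ) < (m + 1) / β := (lt_div_iff₀ hβ0).2 (Int.lt_floor_add_one _)
  have hp' : (0 : ℝ) < p := by exact_mod_cast hp
  have hq' : (0 : ℝ) ≤ q := q.cast_nonneg
  have hlo : (m : ℝ) < p * i + q * j := by
    have := mul_lt_mul_of_pos_left hi_lo hp'
    have := mul_le_mul_of_nonneg_left hj_lo hq'
    calc (m : ℝ) = p * (m / α) + q * (m / β) := by linear_combination -(m : ℝ) * hpq
    _ < _ := by linarith
  have hup : (p * i + q * j : ℝ) < m + 1 := by
    have := mul_lt_mul_of_pos_left hi_hi hp'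
    have := mul_le_mul_of_nonneg_left hj_hi.le hq'
    calc (p * i + q * j : ℝ) < p * ((m + 1) / α) + q * ((m + 1) / β) := by linarith
    _ = m + 1 := by linear_combination ((m : ℝ) + 1) * hpq
  have hlo' : m < p * i + q * j := by exact_mod_cast hlo
  have hup' : p * i + q * j < m + 1 := by exact_mod_cast hup
  omega

lemma le_iff_le_count_of_enum {S : Set ℕ} [DecidablePred (· ∈ S)] {ct : ℕ → ℕ}
    (hmem : ∀ n, 1 ≤ n → ct n ∈ S) (hmono : ∀ n, 1 ≤ n → ct n < ct (n + 1))
    (hsurj : ∀ x ∈ S, ∃ n, 1 ≤ n ∧ ct n = x) {n : ℕ} (hn : 1 ≤ n) (M : ℕ) :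
    ct n ≤ M ↔ n ≤ Nat.count (· ∈ S) (M + 1) := by
  have hct : StrictMono fun k => ct (k + 1) :=
    strictMono_nat_of_lt_succ fun k => hmono (k + 1) (by omega)
  have hS : S.Infinite :=
    Set.infinite_of_injective_forall_mem hct.injective fun k => hmem (k + 1) (by omega)
  have hinf (k : ℕ) : ∀ hf : (Set.ofPred (· ∈ S)).Finite, k < hf.toFinset.card :=
    fun hf => absurd hf hS
  have hnth (k : ℕ) : ct (k + 1) = Nat.nth (· ∈ S) k :=
    Nat.eq_nth_of_strictMonoOn_of_mapsTo_of_surjOn _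
      (fun x hx => by
        obtain ⟨m, hm, rfl⟩ := hsurj x hx
        exact ⟨m - 1, hinf _, by simp only [Nat.sub_add_cancel hm]⟩)
      (fun k _ => hmem (k + 1) (by omega)) (hct.strictMonoOn _) (hinf k)
  obtain ⟨k, rfl⟩ : ∃ k, n = k + 1 := ⟨n - 1, by omega⟩
  rw [hnth, Nat.le_iff_lt_add_one, ← Nat.lt_nth_iff_count_lt (p := (· ∈ S)) hS]
  omega

lemma count_add_count_add_count {P Q R : ℕ → Prop} [DecidablePred P] [DecidablePred Q]
    [DecidablePred R] (hR : ∀ x, R x ↔ 0 < x ∧ ¬P x ∧ ¬Q x) (hP : ¬P 0) (hQ : ¬Q 0)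
    (hPQ : ∀ x, P x → ¬Q x) (M : ℕ) :
    Nat.count R (M + 1) + Nat.count P (M + 1) + Nat.count Q (M + 1) = M := by
  induction M with
  | zero => simp [Nat.count_one, hR, hP, hQ]
  | succ M ih =>
    rw [Nat.count_succ R, Nat.count_succ P, Nat.count_succ Q]
    have := hPQ (M + 1)
    have := hR (M + 1)
    split_ifs <;> grind

open Classical in
theorem enum_beattyComplement_le_natFloor_mul_le_add_two {α β γ : ℝ} (hα : 1 ≤ α)
    (hβ : 1 ≤ β) (hγ : 0 < γ) (hγ2 : γ < 2) (hsum : 1 / α + 1 / β + 1 / γ = 1)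
    (hdisj : ∀ x, IsBeattyValue α x → ¬IsBeattyValue β x) {ct : ℕ → ℕ}
    (hmem : ∀ n, 1 ≤ n → ct n ∈ beattyComplement α β)
    (hmono : ∀ n, 1 ≤ n → ct n < ct (n + 1))
    (hsurj : ∀ x ∈ beattyComplement α β, ∃ n, 1 ≤ n ∧ ct n = x) {n : ℕ} (hn : 1 ≤ n) :
    ct n ≤ ⌊n * γ⌋₊ ∧ ⌊n * γ⌋₊ ≤ ct n + 2 := by
  have hpart := count_add_count_add_count (R := (· ∈ beattyComplement α β)) (fun _ => Iff.rfl)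
    (not_isBeattyValue_zero hα) (not_isBeattyValue_zero hβ) hdisj
  have henum := le_iff_le_count_of_enum hmem hmono hsurj hn
  set N := ⌊n * γ⌋₊
  constructor
  · have hpartN := hpart N
    obtain ⟨hA, -⟩ := div_mem_Ioc_count_isBeattyValue hα N
    obtain ⟨hB, -⟩ := div_mem_Ioc_count_isBeattyValue hβ N
    set a := Nat.count (IsBeattyValue α) (N + 1)
    set b := Nat.count (IsBeattyValue β) (N + 1)
    have hn' : (n : ℝ) < (N + 1) / γ := (lt_div_iff₀ hγ).2 (Nat.lt_floor_add_one _)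
    have : (a + b + n : ℝ) < N + 1 :=
      calc _ < (N + 1) / α + (N + 1) / β + (N + 1) / γ := by linarith
      _ = N + 1 := by linear_combination ((N : ℝ) + 1) * hsum
    have : a + b + n < N + 1 := by exact_mod_cast this
    rw [henum]
    omega
  · by_contra! hlt
    obtain ⟨M, hM⟩ : ∃ M, N = M + 3 := ⟨N - 3, by omega⟩
    have hcount := (henum M).1 (by omega)
    have hpartM := hpart M
    obtain ⟨-, hA⟩ := div_mem_Ioc_count_isBeattyValue hα M
    obtain ⟨-, hB⟩ := div_mem_Ioc_count_isBeattyValue hβ M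
    set a := Nat.count (IsBeattyValue α) (M + 1)
    set b := Nat.count (IsBeattyValue β) (M + 1)
    have hN : (N : ℝ) ≤ n * γ := Nat.floor_le (by positivity)
    have hn' : ((M : ℝ) + 3) / γ ≤ n := (div_le_iff₀ hγ).2 (by rw [hM] at hN; exact_mod_cast hN)
    have : (M : ℝ) < a + b + n := by
      have : 1 < 2 / γ := (one_lt_div hγ).2 hγ2
      have : (M + 1) / α + (M + 1) / β + (M + 3) / γ - 2 = M + (2 / γ - 1) := by
        linear_combination ((M : ℝ) + 1) * hsum
      linarith
    have : M < a + b + n := by exact_mod_cast this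
    omega

open goldenRatio in
lemma irrational_goldenRatio_pow {n : ℕ} (hn : n ≠ 0) : Irrational (φ ^ n) := by
  obtain ⟨m, rfl⟩ := Nat.exists_eq_succ_of_ne_zero hn
  rw [← goldenRatio_mul_fib_succ_add_fib]
  exact (goldenRatio_irrational.mul_natCast (Nat.fib_pos.2 m.succ_pos).ne').add_natCast _

/-- Hildebrand–Li–Li–Xie: if `c̃(n)` is the `n`-th smallest positive integer not
of the form `⌊iφ⁴⌋` or `⌊iφ³⌋` (`i ≥ 1`), then `0 ≤ ⌊nφ⌋ − c̃(n) ≤ 2` for all `n ≥ 1`. -/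
theorem hildebrand_li_li_xie
    (φ : ℝ) (hφ : φ = (1 + Real.sqrt 5) / 2)
    (S : Set ℕ)
    (hS : S = {x : ℕ | 0 < x ∧
      (¬∃ i : ℕ, 1 ≤ i ∧ (x : ℤ) = ⌊(i : ℝ) * φ ^ 4⌋) ∧
      (¬∃ i : ℕ, 1 ≤ i ∧ (x : ℤ) = ⌊(i : ℝ) * φ ^ 3⌋)})
    (ct : ℕ → ℕ)
    -- `ct` enumerates `S` in increasing order, starting at index 1:
    (hmem : ∀ n : ℕ, 1 ≤ n → ct n ∈ S)
    (hmono : ∀ n : ℕ, 1 ≤ n → ct n < ct (n + 1))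
    (hsurj : ∀ x ∈ S, ∃ n : ℕ, 1 ≤ n ∧ ct n = x) :
    ∀ n : ℕ, 1 ≤ n →
      0 ≤ ⌊(n : ℝ) * φ⌋ - (ct n : ℤ) ∧ ⌊(n : ℝ) * φ⌋ - (ct n : ℤ) ≤ 2 := by
  subst hS
  have hφ2 : φ ^ 2 = φ + 1 := hφ ▸ goldenRatio_sq
  have hφ1 : 1 < φ := hφ ▸ one_lt_goldenRatio
  have hdisj (x : ℕ) : IsBeattyValue (φ ^ 4) x → ¬IsBeattyValue (φ ^ 3) x := by
    rintro ⟨i, hi, hx⟩ ⟨j, -, hy⟩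
    refine floor_mul_ne_floor_mul (hφ ▸ irrational_goldenRatio_pow four_ne_zero) (by positivity)
      (by positivity) (p := 2) (q := 3) two_pos ?_ (by omega) j (hx.symm.trans hy)
    field_simp
    linear_combination -(φ ^ 2 + φ + 2) * hφ2
  have hsum : 1 / φ ^ 4 + 1 / φ ^ 3 + 1 / φ = 1 := by
    field_simp
    linear_combination -(φ ^ 2 + 1) * hφ2
  intro n hn
  obtain ⟨hle, hge⟩ := enum_beattyComplement_le_natFloor_mul_le_add_two (one_le_pow₀ hφ1.le)
    (one_le_pow₀ hφ1.le) (by positivity) (hφ ▸ goldenRatio_lt_two) hsum hdisj hmem hmono hsurj hn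
  rw [← Int.natCast_floor_eq_floor (by positivity)]
  omega
end

section
/- Let φ = (1 + √5)/2 be the golden ratio. Then the sets {⌊mφ⁴⌋ : m ≥ 1} and {⌊nφ³⌋ : n ≥ 1} are disjoint; that is, there are no integers m ≥ 1 and n ≥ 1 with ⌊mφ⁴⌋ = ⌊nφ³⌋. -/
/-!
If `⌊m α⌋ = ⌊n β⌋ = N`, then `m α` and `n β` lie in `[N, N + 1)`, and `m α ≠ N` when `α`
is irrational. Given integers `p > 0, q ≥ 0` with `p / α + q / β = 1`, the integer
`p m + q n = (p / α) (m α) + (q / β) (n β)` is then a weighted mean of two numbers in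
`[N, N + 1)`, one of them in `(N, N + 1)`, which is impossible. For `α = φ⁴ = 3φ + 2` and
`β = φ³` the weights are `p = 2`, `q = 3`, because `2 + 3φ = φ⁴`.
-/

open Real goldenRatio

theorem floor_mul_ne_floor_mul_of_div_add_div_eq_one {α β : ℝ} (hα : 0 < α) (hβ : 0 < β)
    (hirr : Irrational α) {p q : ℕ} (hp : 0 < p) (hpq : p / α + q / β = 1) {m n : ℤ}
    (hm : m ≠ 0) : ⌊m * α⌋ ≠ ⌊n * β⌋ := by
  intro h
  set N := ⌊n * β⌋
  have hNm : (N : ℝ) < m * α :=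
    lt_of_le_of_ne (h ▸ Int.floor_le _) ((hirr.intCast_mul hm).ne_int N).symm
  have hmN : m * α < N + 1 := h ▸ Int.lt_floor_add_one _
  have hNn : (N : ℝ) ≤ n * β := Int.floor_le _
  have hnN : n * β < N + 1 := Int.lt_floor_add_one _
  have hpα : (0 : ℝ) < p / α := by positivity
  have hqβ : (0 : ℝ) ≤ q / β := by positivity
  have hmean : ((p * m + q * n : ℤ) : ℝ) = p / α * (m * α) + q / β * (n * β) := by
    push_cast
    field_simp
  have hlow : (N : ℝ) < ((p * m + q * n : ℤ) : ℝ) := by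
    calc (N : ℝ) = p / α * N + q / β * N := by rw [← add_mul, hpq, one_mul]
      _ < p / α * (m * α) + q / β * (n * β) :=
        add_lt_add_of_lt_of_le (mul_lt_mul_of_pos_left hNm hpα)
          (mul_le_mul_of_nonneg_left hNn hqβ)
      _ = _ := hmean.symm
  have hup : ((p * m + q * n : ℤ) : ℝ) < N + 1 := by
    calc ((p * m + q * n : ℤ) : ℝ) = p / α * (m * α) + q / β * (n * β) := hmean
      _ < p / α * (N + 1) + q / β * (N + 1) :=
        add_lt_add_of_lt_of_le (mul_lt_mul_of_pos_left hmN hpα)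
          (mul_le_mul_of_nonneg_left hnN.le hqβ)
      _ = N + 1 := by rw [← add_mul, hpq, one_mul]
  have hlow' : N < p * m + q * n := by exact_mod_cast hlow
  have hup' : p * m + q * n < N + 1 := by exact_mod_cast hup
  omega

theorem goldenRatio_pow_four : φ ^ 4 = 3 * φ + 2 := by
  linear_combination (φ ^ 2 + φ + 2) * goldenRatio_sq

theorem irrational_goldenRatio_pow_four : Irrational (φ ^ 4) := by
  simpa [goldenRatio_pow_four] using
    (goldenRatio_irrational.natCast_mul three_ne_zero).add_natCast 2

theorem two_div_goldenRatio_pow_four_add_three_div_goldenRatio_pow_three :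
    (2 : ℝ) / φ ^ 4 + 3 / φ ^ 3 = 1 := by
  rw [div_add_div _ _ (by positivity) (by positivity), div_eq_one_iff_eq (by positivity)]
  linear_combination (-φ ^ 3) * goldenRatio_pow_four

/-- The Beatty sequences `⌊mφ⁴⌋` and `⌊nφ³⌋` (for `m, n ≥ 1`) are disjoint,
where `φ` is the golden ratio. -/
theorem beatty_phi4_phi3_disjoint :
    ¬∃ m n : ℕ, 1 ≤ m ∧ 1 ≤ n ∧
      ⌊(m : ℝ) * ((1 + Real.sqrt 5) / 2) ^ 4⌋
        = ⌊(n : ℝ) * ((1 + Real.sqrt 5) / 2) ^ 3⌋ := by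
  rintro ⟨m, n, hm, -, heq⟩
  refine floor_mul_ne_floor_mul_of_div_add_div_eq_one (pow_pos goldenRatio_pos 4)
    (pow_pos goldenRatio_pos 3) irrational_goldenRatio_pow_four two_pos
    (by exact_mod_cast two_div_goldenRatio_pow_four_add_three_div_goldenRatio_pow_three)
    (m := m) (n := n) (by omega) ?_
  exact_mod_cast heq
end

section
/- For every natural number i ≥ 0, the number of natural numbers m with ⌊m(√2 − 1)⌋ = i equals ⌈(i+1)(√2 + 1)⌉ − ⌈i(√2 + 1)⌉. (Equivalently, A097509(i) = A080754(i+1) − A080754(i) for all i ≥ 0.) -/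
/-! Since `(√2 - 1)⁻¹ = √2 + 1`, the condition `i ≤ m (√2 - 1) < i + 1` says exactly
`i (√2 + 1) ≤ m < (i + 1)(√2 + 1)`, and for an integer `m` this means
`⌈i (√2 + 1)⌉ ≤ m < ⌈(i + 1)(√2 + 1)⌉`. -/

section FloorRing

variable {K : Type*} [Field K] [LinearOrder K] [IsStrictOrderedRing K] [FloorRing K]

theorem setOf_floor_natCast_mul_eq {α : K} (hα : 0 < α) (i : ℤ) :
    {m : ℕ | ⌊(m : K) * α⌋ = i} = Set.Ico ⌈i / α⌉₊ ⌈(i + 1) / α⌉₊ := by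
  ext m
  rw [Set.mem_ofPred_eq, Set.mem_Ico, Int.floor_eq_iff, Nat.ceil_le, Nat.lt_ceil,
    div_le_iff₀ hα, lt_div_iff₀ hα]

theorem ncard_setOf_floor_natCast_mul_eq {α : K} (hα : 0 < α) (i : ℕ) :
    ({m : ℕ | ⌊(m : K) * α⌋ = i}.ncard : ℤ) = ⌈(i + 1) / α⌉ - ⌈i / α⌉ := by
  have hi : (0 : K) ≤ i / α := by positivity
  have hi' : (0 : K) ≤ (i + 1) / α := by positivity
  have hmono : ⌈(i : K) / α⌉₊ ≤ ⌈(i + 1) / α⌉₊ :=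
    Nat.ceil_mono (div_le_div_of_nonneg_right (le_add_of_nonneg_right zero_le_one) hα.le)
  rw [setOf_floor_natCast_mul_eq hα, Set.ncard_eq_toFinset_card', Set.toFinset_Ico,
    Nat.card_Ico, Int.cast_natCast, Nat.cast_sub hmono, Int.natCast_ceil_eq_ceil hi,
    Int.natCast_ceil_eq_ceil hi']

end FloorRing

/-- For every `i ≥ 0`, the number of `m` with `⌊m(√2−1)⌋ = i` equals
`⌈(i+1)(√2+1)⌉ − ⌈i(√2+1)⌉` (i.e., A097509(i) = A080754(i+1) − A080754(i)). -/
theorem A097509_eq_diff_A080754 :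
    ∀ i : ℕ,
      (({m : ℕ | ⌊(m : ℝ) * (Real.sqrt 2 - 1)⌋ = (i : ℤ)}.ncard : ℤ))
        = ⌈((i : ℝ) + 1) * (Real.sqrt 2 + 1)⌉ - ⌈(i : ℝ) * (Real.sqrt 2 + 1)⌉ := by
  intro i
  have hpos : 0 < Real.sqrt 2 - 1 := sub_pos.2 Real.one_lt_sqrt_two
  rw [ncard_setOf_floor_natCast_mul_eq hpos, div_eq_mul_inv, div_eq_mul_inv,
    Real.inv_sqrt_two_sub_one]
end

section
/- For every natural number n ≥ 0, the number of natural numbers m with ⌊m(√2 − 1)⌋ = n is either 2 or 3. -/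
/-!
For `α > 0` we have `⌊m α⌋ = n` iff `n / α ≤ m < (n + 1) / α`, so `n` is hit by exactly
`⌈n / α + α⁻¹⌉₊ - ⌈n / α⌉₊` values of `m`; since the ceiling is subadditive up to one, this is
`⌈α⁻¹⌉₊ - 1` or `⌈α⁻¹⌉₊`. For `α = √2 - 1` we have `α⁻¹ = √2 + 1 ∈ (2, 3)`.
-/

theorem Nat.ceil_add_ceil_le {R : Type*} [Ring R] [LinearOrder R] [IsStrictOrderedRing R]
    [FloorRing R] {a b : R} (ha : 0 ≤ a) (hb : 0 ≤ b) : ⌈a⌉₊ + ⌈b⌉₊ ≤ ⌈a + b⌉₊ + 1 := by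
  have h := Int.ceil_add_ceil_le a b
  rw [← Int.natCast_ceil_eq_ceil ha, ← Int.natCast_ceil_eq_ceil hb,
    ← Int.natCast_ceil_eq_ceil (add_nonneg ha hb)] at h
  exact_mod_cast h

section FloorMul

variable {K : Type*} [Field K] [LinearOrder K] [IsStrictOrderedRing K] [FloorRing K]
  {α : K}

theorem setOf_floor_mul_eq (hα : 0 < α) (n : ℕ) :
    {m : ℕ | ⌊(m : K) * α⌋ = n} = Finset.Ico ⌈n / α⌉₊ ⌈(n + 1) / α⌉₊ := by
  ext m
  simp [Int.floor_eq_iff, Nat.ceil_le, Nat.lt_ceil, div_le_iff₀ hα, lt_div_iff₀ hα]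

theorem ncard_setOf_floor_mul_eq (hα : 0 < α) (n : ℕ) :
    {m : ℕ | ⌊(m : K) * α⌋ = n}.ncard = ⌈n / α + α⁻¹⌉₊ - ⌈n / α⌉₊ := by
  rw [setOf_floor_mul_eq hα, Set.ncard_coe_finset, Nat.card_Ico, add_div, one_div]

theorem ncard_setOf_floor_mul_eq_ceil_inv_sub_one_or_ceil_inv (hα : 0 < α) (n : ℕ) :
    {m : ℕ | ⌊(m : K) * α⌋ = n}.ncard = ⌈α⁻¹⌉₊ - 1 ∨
      {m : ℕ | ⌊(m : K) * α⌋ = n}.ncard = ⌈α⁻¹⌉₊ := by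
  have hx : 0 ≤ (n : K) / α := by positivity
  have hlo := Nat.ceil_add_ceil_le hx (inv_nonneg.mpr hα.le)
  have hhi := Nat.ceil_add_le ((n : K) / α) α⁻¹
  rw [ncard_setOf_floor_mul_eq hα]
  omega

end FloorMul

theorem inv_sqrt_two_sub_one : (Real.sqrt 2 - 1)⁻¹ = Real.sqrt 2 + 1 := by
  have h : (Real.sqrt 2 - 1) * (Real.sqrt 2 + 1) = 1 := by
    ring_nf
    norm_num
  exact inv_eq_of_mul_eq_one_right h

theorem ceil_sqrt_two_add_one : ⌈Real.sqrt 2 + 1⌉₊ = 3 := by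
  rw [Nat.ceil_eq_iff three_ne_zero]
  push_cast
  constructor <;> linarith [Real.one_lt_sqrt_two, Real.sqrt_two_lt_three_halves]

/-- Every `n` occurs either 2 or 3 times as a value of `m ↦ ⌊m(√2−1)⌋`. -/
theorem A097509_two_or_three :
    ∀ n : ℕ,
      {m : ℕ | ⌊(m : ℝ) * (Real.sqrt 2 - 1)⌋ = (n : ℤ)}.ncard = 2 ∨
      {m : ℕ | ⌊(m : ℝ) * (Real.sqrt 2 - 1)⌋ = (n : ℤ)}.ncard = 3 := by
  intro n
  have hα : 0 < Real.sqrt 2 - 1 := sub_pos.mpr Real.one_lt_sqrt_two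
  simpa [inv_sqrt_two_sub_one, ceil_sqrt_two_add_one] using
    ncard_setOf_floor_mul_eq_ceil_inv_sub_one_or_ceil_inv hα n
end

section
/- Define b(i) to be the number of natural numbers m with ⌊m(√2 − 1)⌋ = i + 1. Then for every n ≥ 0, b(⌈(n+2)(√2 + 1)⌉ − 5) = b(n); that is, if t = b(1) + ⋯ + b(n) then b(t) = b(n). -/
/-!
With `σ = √2 + 1 = (√2 - 1)⁻¹`, one has `⌊m(√2 - 1)⌋ = k` iff `m ∈ [kσ, (k+1)σ)`, so
`b(i) = ⌈(i+2)σ⌉ - ⌈(i+1)σ⌉` is a gap of a Beatty sequence and depends only on `(i+1)σ`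
modulo `1`. Write `c = ⌈(n+2)σ⌉ = (n+2)σ + δ` with `0 ≤ δ < 1`. As `σ² = 2σ + 1`, modulo
integers `(c - 4)σ ≡ δ(√2 - 1) - 4σ` and `(n+1)σ ≡ -δ - σ`; both gaps are `2` if `δ < 2 - √2`
and `3` if `δ > 2 - √2`, and `δ = 2 - √2` is excluded by the irrationality of `√2`.
-/

theorem Nat.ncard_setOf_cast_mem_Ico {K : Type*} [Semiring K] [LinearOrder K] [FloorSemiring K]
    (x y : K) : {m : ℕ | (m : K) ∈ Set.Ico x y}.ncard = ⌈y⌉₊ - ⌈x⌉₊ := by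
  have : {m : ℕ | (m : K) ∈ Set.Ico x y} = Finset.Ico ⌈x⌉₊ ⌈y⌉₊ := by
    ext m; simp [Nat.lt_ceil]
  rw [this, Set.ncard_coe_finset, Nat.card_Ico]

theorem Int.floor_mul_eq_iff_mem_Ico_div {K : Type*} [Field K] [LinearOrder K]
    [IsStrictOrderedRing K] [FloorRing K] {β : K} (hβ : 0 < β) (x : K) (k : ℤ) :
    ⌊x * β⌋ = k ↔ x ∈ Set.Ico (k / β) ((k + 1) / β) := by
  rw [Int.floor_eq_iff, Set.mem_Ico, div_le_iff₀ hβ, lt_div_iff₀ hβ]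

noncomputable def ceilGap (a y : ℝ) : ℤ := ⌈y + a⌉ - ⌈y⌉

theorem ceilGap_add_intCast (a y : ℝ) (k : ℤ) : ceilGap a (y + k) = ceilGap a y := by
  simp only [ceilGap, add_right_comm y (k : ℝ) a, Int.ceil_add_intCast]
  ring

theorem ncard_setOf_floor_mul_eq_s14 {β : ℝ} (hβ : 0 < β) {k : ℤ} (hk : 0 ≤ k) :
    ({m : ℕ | ⌊(m : ℝ) * β⌋ = k}.ncard : ℤ) = ceilGap β⁻¹ (k * β⁻¹) := by
  have hkβ : (0 : ℝ) ≤ k * β⁻¹ := by positivity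
  simp only [Int.floor_mul_eq_iff_mem_Ico_div hβ, Nat.ncard_setOf_cast_mem_Ico, div_eq_mul_inv,
    add_mul, one_mul]
  rw [Nat.cast_sub (Nat.ceil_mono (le_add_of_nonneg_right (inv_nonneg.2 hβ.le))),
    Int.natCast_ceil_eq_ceil hkβ, Int.natCast_ceil_eq_ceil (by positivity), ceilGap]

theorem ceilGap_silver_eq {δ : ℝ} (h0 : 0 ≤ δ) (h1 : δ < 1) (hδ : δ ≠ 2 - √2) :
    ceilGap (√2 + 1) (δ * (√2 - 1) - 4 * (√2 + 1)) = ceilGap (√2 + 1) (-δ - (√2 + 1)) := by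
  have hs : √2 * √2 = 2 := Real.mul_self_sqrt zero_le_two
  have hlo : 1.414 < √2 := by nlinarith [Real.sqrt_nonneg 2]
  have hhi : √2 < 1.415 := by nlinarith [Real.sqrt_nonneg 2]
  have hneg : ⌈-δ⌉ = 0 := by rw [Int.ceil_eq_iff]; push_cast; constructor <;> linarith
  have hfar : ⌈δ * (√2 - 1) - 4 * (√2 + 1)⌉ = -9 := by
    rw [Int.ceil_eq_iff]; push_cast; constructor <;> nlinarith
  rw [ceilGap, ceilGap, sub_add_cancel, hneg, hfar]
  rcases hδ.lt_or_gt with hlt | hgt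
  · have hl : ⌈-δ - (√2 + 1)⌉ = -2 := by
      rw [Int.ceil_eq_iff]; push_cast; constructor <;> linarith
    have hr : ⌈δ * (√2 - 1) - 4 * (√2 + 1) + (√2 + 1)⌉ = -7 := by
      rw [Int.ceil_eq_iff]; push_cast; constructor <;> nlinarith
    rw [hl, hr]; rfl
  · have hl : ⌈-δ - (√2 + 1)⌉ = -3 := by
      rw [Int.ceil_eq_iff]; push_cast; constructor <;> linarith
    have hr : ⌈δ * (√2 - 1) - 4 * (√2 + 1) + (√2 + 1)⌉ = -6 := by
      rw [Int.ceil_eq_iff]; push_cast; constructor <;> nlinarith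
    rw [hl, hr]; rfl

/-- With `b(i)` the number of `m` with `⌊m(√2−1)⌋ = i+1`, one has
`b(⌈(n+2)(√2+1)⌉ − 5) = b(n)` for all `n ≥ 0`; i.e., if `t = b(1) + ⋯ + b(n)`
then `b(t) = b(n)`. -/
theorem b_at_partial_sum
    (b : ℕ → ℕ)
    (hb : ∀ i : ℕ, b i = {m : ℕ | ⌊(m : ℝ) * (Real.sqrt 2 - 1)⌋ = (i : ℤ) + 1}.ncard) :
    ∀ n : ℕ, b ((⌈((n : ℝ) + 2) * (Real.sqrt 2 + 1)⌉ - 5).toNat) = b n := by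
  intro n
  have hs : √2 * √2 = 2 := Real.mul_self_sqrt zero_le_two
  have hb' (i : ℕ) : (b i : ℤ) = ceilGap (√2 + 1) ((i + 1) * (√2 + 1)) := by
    rw [hb, ncard_setOf_floor_mul_eq_s14 (sub_pos.2 Real.one_lt_sqrt_two) (by positivity),
      Real.inv_sqrt_two_sub_one]
    push_cast; rfl
  set c := ⌈((n : ℝ) + 2) * (√2 + 1)⌉
  set δ := c - ((n : ℝ) + 2) * (√2 + 1)
  have hδ0 : 0 ≤ δ := sub_nonneg.2 (Int.le_ceil _)
  have hδ1 : δ < 1 := by linarith [Int.ceil_lt_add_one (((n : ℝ) + 2) * (√2 + 1))]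
  have hδ : δ ≠ 2 - √2 := fun h ↦
    (irrational_sqrt_two.natCast_mul n.succ_ne_zero).ne_int (c - n - 4) (by push_cast; linarith)
  have hc : (5 : ℤ) ≤ c := by
    have : (4 : ℝ) < c := by
      nlinarith [Int.le_ceil (((n : ℝ) + 2) * (√2 + 1)), Real.one_lt_sqrt_two]
    exact_mod_cast this
  have ht : ((c - 5).toNat : ℝ) = c - 5 := by exact_mod_cast Int.toNat_of_nonneg (by omega)
  apply Nat.cast_injective (R := ℤ)
  calc (b (c - 5).toNat : ℤ)
      = ceilGap (√2 + 1) (δ * (√2 - 1) - 4 * (√2 + 1) + (2 * c + n + 2 : ℤ)) := by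
        rw [hb', ht]; congr 1; push_cast; linear_combination ((n : ℝ) + 2) * hs
    _ = ceilGap (√2 + 1) (-δ - (√2 + 1) + c) := by
        rw [ceilGap_add_intCast, ceilGap_silver_eq hδ0 hδ1 hδ, ceilGap_add_intCast]
    _ = b n := by rw [hb']; congr 1; ring
end

section
/- Let φ = (1 + √5)/2 be the golden ratio, and let L(n) = ⌊nφ⌋ (lower Wythoff) and U(n) = ⌊nφ²⌋ (upper Wythoff). Fix an integer n ≥ 1 and suppose U(n) is odd. Let i ≥ 1 be the least integer such that U(n−1) < L(i) < U(n+1) and L(i−1) < U(n) < L(i+1). Then L(i) = 2⌊n(φ+1)/2⌋. (Together with the trivial case that U(n) = 2⌊n(φ+1)/2⌋ when U(n) is even, this shows the lower even swappage sequence satisfies V_le(n) = 2⌊n(φ+1)/2⌋.) -/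
/-!
Write `L n = ⌊nφ⌋` and `U n = ⌊nφ²⌋ = L n + n`. The classical identity `L (L n) = U n - 1`,
the gap bounds `L (j + 1) - L j ∈ {1, 2}`, `U (j + 1) - U j ≥ 2` and the disjointness of `L` and
`U` on positive indices (Rayleigh) show that `L n` is a swap index, so the least swap index `i`
has `L i ≤ U n - 1`; conversely `U n < L (i + 1) ≤ L i + 2`. When `U n` is odd,
`U n - 1 = 2 ⌊U n / 2⌋ = 2 ⌊n(φ + 1)/2⌋`.
-/

section Wythoff

open Real goldenRatio

noncomputable def lowerWythoff (n : ℕ) : ℤ := ⌊n * φ⌋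

noncomputable def upperWythoff (n : ℕ) : ℤ := ⌊n * φ ^ 2⌋

lemma floor_goldenRatio : ⌊φ⌋ = 1 :=
  Int.floor_eq_iff.mpr ⟨by simpa using one_lt_goldenRatio.le, by
    simpa [one_add_one_eq_two] using goldenRatio_lt_two⟩

lemma upperWythoff_eq_lowerWythoff_add (n : ℕ) : upperWythoff n = lowerWythoff n + n := by
  rw [upperWythoff, lowerWythoff, goldenRatio_sq, mul_add, mul_one, Int.floor_add_natCast]

lemma lowerWythoff_succ (n : ℕ) : lowerWythoff (n + 1) = ⌊n * φ + φ⌋ := by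
  rw [lowerWythoff, Nat.cast_succ, add_one_mul]

lemma lowerWythoff_lt_succ (n : ℕ) : lowerWythoff n < lowerWythoff (n + 1) := by
  have := Int.le_floor_add (n * φ) φ
  rw [floor_goldenRatio] at this
  rw [lowerWythoff_succ, lowerWythoff]
  omega

lemma lowerWythoff_strictMono : StrictMono lowerWythoff :=
  strictMono_nat_of_lt_succ lowerWythoff_lt_succ

lemma lowerWythoff_succ_le (n : ℕ) : lowerWythoff (n + 1) ≤ lowerWythoff n + 2 := by
  have := Int.le_floor_add_floor (n * φ) φ
  rw [floor_goldenRatio] at this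
  rw [lowerWythoff_succ, lowerWythoff]
  omega

lemma upperWythoff_add_two_le (n : ℕ) : upperWythoff n + 2 ≤ upperWythoff (n + 1) := by
  have := lowerWythoff_lt_succ n
  rw [upperWythoff_eq_lowerWythoff_add, upperWythoff_eq_lowerWythoff_add]
  push_cast
  omega

lemma lowerWythoff_pos {n : ℕ} (hn : 0 < n) : 0 < lowerWythoff n := by
  rw [lowerWythoff, Int.floor_pos]
  exact one_le_mul_of_one_le_of_one_le (by exact_mod_cast hn) one_lt_goldenRatio.le

lemma holderConjugate_goldenRatio_sq : Real.HolderConjugate φ (φ ^ 2) := by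
  refine Real.holderConjugate_iff.mpr ⟨one_lt_goldenRatio, ?_⟩
  rw [← inv_pow, inv_goldenRatio, neg_sq, goldenConj_sq]
  ring

lemma lowerWythoff_ne_upperWythoff {j n : ℕ} (hj : 0 < j) (hn : 0 < n) :
    lowerWythoff j ≠ upperWythoff n := by
  intro h
  have hpos : lowerWythoff j ∈ {m : ℤ | 0 < m} := lowerWythoff_pos hj
  rw [← goldenRatio_irrational.beattySeq_symmDiff_beattySeq_pos holderConjugate_goldenRatio_sq,
    Set.mem_symmDiff] at hpos
  have hL : lowerWythoff j ∈ {beattySeq φ k | k > 0} :=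
    ⟨j, by exact_mod_cast hj, by simp [beattySeq, lowerWythoff]⟩
  have hU : lowerWythoff j ∈ {beattySeq (φ ^ 2) k | k > 0} :=
    ⟨n, by exact_mod_cast hn, by simp [beattySeq, h, upperWythoff]⟩
  tauto

lemma floor_floor_mul_goldenRatio_mul_goldenRatio {n : ℤ} (hn : n ≠ 0) :
    ⌊(⌊n * φ⌋ : ℝ) * φ⌋ = ⌊n * φ⌋ + n - 1 := by
  set f := Int.fract ((n : ℝ) * φ)
  have hf0 : 0 < f := Int.fract_pos.mpr ((goldenRatio_irrational.intCast_mul hn).ne_int _)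
  have hf1 : f < 1 := Int.fract_lt_one _
  -- `⌊nφ⌋ φ = nφ² - fφ = ⌊nφ⌋ + n - f (φ - 1)` with `0 < f (φ - 1) < 1`.
  have hsplit : (⌊n * φ⌋ : ℝ) * φ = ((⌊n * φ⌋ + n - 1 : ℤ) : ℝ) + (1 - f * (φ - 1)) := by
    push_cast
    rw [← Int.self_sub_fract]
    linear_combination (n : ℝ) * goldenRatio_sq
  have hφ := one_lt_goldenRatio
  have hφ2 := goldenRatio_lt_two
  rw [hsplit, Int.floor_intCast_add, add_eq_left, Int.floor_eq_zero_iff]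
  constructor <;> nlinarith

lemma lowerWythoff_lowerWythoff {n : ℕ} (hn : 0 < n) :
    lowerWythoff (lowerWythoff n).toNat = upperWythoff n - 1 := by
  have hcast : ((lowerWythoff n).toNat : ℝ) = (lowerWythoff n : ℝ) := by
    exact_mod_cast Int.toNat_of_nonneg (lowerWythoff_pos hn).le
  have := floor_floor_mul_goldenRatio_mul_goldenRatio (n := n) (by omega)
  push_cast at this
  rw [lowerWythoff, hcast, lowerWythoff, this, upperWythoff_eq_lowerWythoff_add, lowerWythoff]

/-- The conditions imposed on the index `i` in the definition of `V_le(n)`. -/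
def IsSwapIndex (n j : ℕ) : Prop :=
  upperWythoff (n - 1) < lowerWythoff j ∧ lowerWythoff j < upperWythoff (n + 1) ∧
    lowerWythoff (j - 1) < upperWythoff n ∧ upperWythoff n < lowerWythoff (j + 1)

lemma isSwapIndex_lowerWythoff {n : ℕ} (hn : 0 < n) : IsSwapIndex n (lowerWythoff n).toNat := by
  have hLi := lowerWythoff_lowerWythoff hn
  have hi : 0 < (lowerWythoff n).toNat := by have := lowerWythoff_pos hn; omega
  generalize (lowerWythoff n).toNat = i at hLi hi ⊢
  have hUgap := upperWythoff_add_two_le (n - 1)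
  rw [Nat.sub_add_cancel hn] at hUgap
  have hprev := lowerWythoff_lt_succ (i - 1)
  rw [Nat.sub_add_cancel hi] at hprev
  have hnext := lowerWythoff_lt_succ i
  have hne := lowerWythoff_ne_upperWythoff (by omega : 0 < i + 1) hn
  exact ⟨by omega, by linarith [upperWythoff_add_two_le n], by omega, by omega⟩

lemma le_lowerWythoff_of_isSwapIndex {n i : ℕ} (hi : IsSwapIndex n i) :
    upperWythoff n - 1 ≤ lowerWythoff i := by
  linarith [hi.2.2.2, lowerWythoff_succ_le i]

lemma lowerWythoff_eq_of_isLeast_swapIndex {n i : ℕ} (hn : 0 < n) (hi : IsSwapIndex n i)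
    (hleast : ∀ j, 1 ≤ j → IsSwapIndex n j → i ≤ j) :
    lowerWythoff i = upperWythoff n - 1 := by
  have hi₀ : 1 ≤ (lowerWythoff n).toNat := by have := lowerWythoff_pos hn; omega
  have hle := lowerWythoff_strictMono.monotone (hleast _ hi₀ (isSwapIndex_lowerWythoff hn))
  rw [lowerWythoff_lowerWythoff hn] at hle
  exact hle.antisymm (le_lowerWythoff_of_isSwapIndex hi)

lemma floor_mul_goldenRatio_add_one_div_two (n : ℕ) :
    ⌊n * (φ + 1) / 2⌋ = upperWythoff n / 2 := by
  have := Int.floor_div_natCast (n * φ ^ 2) 2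
  rw [← goldenRatio_sq, upperWythoff]
  exact_mod_cast this

end Wythoff

theorem lower_even_swappage_odd_case_general
    (φ : ℝ) (hφ : φ = (1 + Real.sqrt 5) / 2)
    (L U : ℕ → ℤ)
    (hL : ∀ n : ℕ, L n = ⌊(n : ℝ) * φ⌋) (hU : ∀ n : ℕ, U n = ⌊(n : ℝ) * φ ^ 2⌋)
    (n : ℕ) (hn : 1 ≤ n) (hodd : Odd (U n))
    (i : ℕ)
    (hcond : U (n - 1) < L i ∧ L i < U (n + 1) ∧ L (i - 1) < U n ∧ U n < L (i + 1))
    (hleast : ∀ j : ℕ, 1 ≤ j →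
      (U (n - 1) < L j ∧ L j < U (n + 1) ∧ L (j - 1) < U n ∧ U n < L (j + 1)) → i ≤ j) :
    L i = 2 * ⌊(n : ℝ) * (φ + 1) / 2⌋ := by
  subst hφ
  obtain rfl : L = lowerWythoff := funext hL
  obtain rfl : U = upperWythoff := funext hU
  rw [lowerWythoff_eq_of_isLeast_swapIndex hn hcond hleast,
    floor_mul_goldenRatio_add_one_div_two, Int.two_mul_ediv_two_of_odd hodd]

/-- The odd case of the lower even swappage sequence: if `U(n)` is odd and `i`
is the least index with `U(n−1) < L(i) < U(n+1)` and `L(i−1) < U(n) < L(i+1)`,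
then `L(i) = 2⌊n(φ+1)/2⌋`. -/
theorem lower_even_swappage_odd_case
    (φ : ℝ) (hφ : φ = (1 + Real.sqrt 5) / 2)
    (L U : ℕ → ℤ)
    (hL : ∀ n : ℕ, L n = ⌊(n : ℝ) * φ⌋) (hU : ∀ n : ℕ, U n = ⌊(n : ℝ) * φ ^ 2⌋)
    (n : ℕ) (hn : 1 ≤ n) (hodd : Odd (U n))
    (i : ℕ) (hi : 1 ≤ i)
    (hcond : U (n - 1) < L i ∧ L i < U (n + 1) ∧ L (i - 1) < U n ∧ U n < L (i + 1))
    (hleast : ∀ j : ℕ, 1 ≤ j →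
      (U (n - 1) < L j ∧ L j < U (n + 1) ∧ L (j - 1) < U n ∧ U n < L (j + 1)) → i ≤ j) :
    L i = 2 * ⌊(n : ℝ) * (φ + 1) / 2⌋ :=
  lower_even_swappage_odd_case_general φ hφ L U hL hU n hn hodd i hcond hleast
end
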